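/- arXiv:1403.5764 — 7 statements merged into one kernel-verified Lean document; each statement's English description precedes it below -/
import Mathlib

section
/- Let φ:[0,∞)→[0,∞) be locally integrable, g:[0,∞)→[0,∞) be locally bounded, and u:[0,∞)→[0,∞) be measurable and locally bounded. If u_t ≤ g_t + ∫₀ᵗ φ(t−s) u_s ds for all t≥0, then for every T>0 there is a constant C_T, depending only on T and φ (not on g or u), such that sup_{t∈[0,T]} u_t ≤ C_T · sup_{t∈[0,T]} g_t. -/
open MeasureTheory Set intervalIntegral

/-- **generalized Grönwall lemma, part (i).**
Let `φ : [0,∞) → [0,∞)` be locally integrable.  Then for every `T > 0` there is a constant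
`C_T` (depending only on `T` and `φ`) such that for every locally bounded nonnegative `g` and
every measurable locally bounded nonnegative `u` satisfying
`u t ≤ g t + ∫₀ᵗ φ(t-s) u s ds` for all `t ≥ 0`, one has
`sup_{[0,T]} u ≤ C_T · sup_{[0,T]} g`. -/
theorem stmt1 (φ : ℝ → ℝ)
    (hφ0 : ∀ t : ℝ, 0 ≤ t → 0 ≤ φ t)
    (hφint : ∀ T : ℝ, 0 ≤ T → IntegrableOn φ (Icc 0 T)) :
    ∀ T : ℝ, 0 < T → ∃ C : ℝ,
      ∀ g u : ℝ → ℝ,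
        (∀ t : ℝ, 0 ≤ t → 0 ≤ g t) →
        (∀ T' : ℝ, 0 ≤ T' → ∃ M : ℝ, ∀ t ∈ Icc (0:ℝ) T', g t ≤ M) →
        Measurable u →
        (∀ t : ℝ, 0 ≤ t → 0 ≤ u t) →
        (∀ T' : ℝ, 0 ≤ T' → ∃ M : ℝ, ∀ t ∈ Icc (0:ℝ) T', u t ≤ M) →
        (∀ t : ℝ, 0 ≤ t → u t ≤ g t + ∫ s in (0:ℝ)..t, φ (t - s) * u s) →
        ∀ t ∈ Icc (0:ℝ) T, u t ≤ C * sSup (g '' Icc (0:ℝ) T) := by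
  intro T hT
  have hφT : IntegrableOn φ (Icc 0 T) := hφint T hT.le
  -- interval integrability of φ on subintervals of [0,T]
  have hφii : ∀ a b : ℝ, 0 ≤ a → a ≤ b → b ≤ T → IntervalIntegrable φ volume a b := by
    intro a b ha hab hbT
    exact (hφT.mono_set (by rw [uIcc_of_le hab]; exact Icc_subset_Icc ha hbT)).intervalIntegrable
  -- nonnegativity of φ a.e. on subintervals of [0,∞)
  have hφae : ∀ a b : ℝ, 0 ≤ a → (0:ℝ → ℝ) ≤ᵐ[volume.restrict (Ioc a b)] φ := by
    intro a b ha
    refine (ae_restrict_iff' measurableSet_Ioc).2 (ae_of_all _ fun s hs => ?_)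
    exact hφ0 s (ha.trans hs.1.le)
  set A : ℝ := ∫ s in (0:ℝ)..T, φ s with hAdef
  have hA0 : 0 ≤ A := by
    rw [hAdef]
    exact intervalIntegral.integral_nonneg hT.le fun s hs => hφ0 s hs.1
  -- choose δ with ∫₀^δ φ ≤ 1/2
  obtain ⟨δ, hδ0, hδT, hδhalf⟩ :
      ∃ δ : ℝ, 0 < δ ∧ δ ≤ T ∧ (∫ s in (0:ℝ)..δ, φ s) ≤ 1 / 2 := by
    have hcont : ContinuousOn (fun x => ∫ t in Ioc (0:ℝ) x, φ t) (Icc 0 T) :=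
      continuousOn_primitive hφT
    have h0mem : (0:ℝ) ∈ Icc (0:ℝ) T := ⟨le_refl _, hT.le⟩
    have hcw : ContinuousWithinAt (fun x => ∫ t in Ioc (0:ℝ) x, φ t) (Icc 0 T) 0 :=
      hcont 0 h0mem
    have h00 : (∫ t in Ioc (0:ℝ) (0:ℝ), φ t) = 0 := by simp
    have := hcw.tendsto
    rw [h00] at this
    have hev : {x : ℝ | (∫ t in Ioc (0:ℝ) x, φ t) < 1 / 2} ∈ nhdsWithin 0 (Icc (0:ℝ) T) :=
      this (Iio_mem_nhds (by norm_num))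
    rw [Metric.mem_nhdsWithin_iff] at hev
    obtain ⟨ε, hε0, hε⟩ := hev
    refine ⟨min (ε/2) T, lt_min (half_pos hε0) hT, min_le_right _ _, ?_⟩
    have hmem : min (ε/2) T ∈ Icc (0:ℝ) T :=
      ⟨le_min (half_pos hε0).le hT.le, min_le_right _ _⟩
    have hd : min (ε/2) T ∈ Metric.ball (0:ℝ) ε := by
      rw [Metric.mem_ball, Real.dist_eq, sub_zero, abs_of_nonneg hmem.1]
      exact lt_of_le_of_lt (min_le_left _ _) (half_lt_self hε0)
    have := hε ⟨hd, hmem⟩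
    rw [intervalIntegral.integral_of_le hmem.1]
    exact this.le
  -- the constant
  obtain ⟨N, hN⟩ : ∃ N : ℕ, T ≤ N * δ := by
    refine ⟨⌈T / δ⌉₊, ?_⟩
    rw [← div_le_iff₀ hδ0] at *
    exact Nat.le_ceil _
  refine ⟨(2 * A + 2) ^ (N + 1), ?_⟩
  intro g u hg0 hgbdd humeas hu0 hubdd hineq
  set G : ℝ := sSup (g '' Icc (0:ℝ) T) with hGdef
  have hGbdd : BddAbove (g '' Icc (0:ℝ) T) := by
    obtain ⟨M, hM⟩ := hgbdd T hT.le
    exact ⟨M, fun y ⟨x, hx, hxy⟩ => hxy ▸ hM x hx⟩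
  have hGle : ∀ t ∈ Icc (0:ℝ) T, g t ≤ G := fun t ht => le_csSup hGbdd ⟨t, ht, rfl⟩
  have hG0 : 0 ≤ G := le_trans (hg0 0 le_rfl) (hGle 0 ⟨le_refl _, hT.le⟩)
  have hbase : (1:ℝ) ≤ 2 * A + 2 := by linarith
  -- integrability of the convolution integrand
  have hconv : ∀ t a b : ℝ, 0 ≤ a → a ≤ b → b ≤ t → t ≤ T →
      IntervalIntegrable (fun s => φ (t - s) * u s) volume a b := by
    intro t a b ha hab hbt htT
    rw [intervalIntegrable_iff_integrableOn_Ioc_of_le hab]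
    have hφc : IntegrableOn (fun s => φ (t - s)) (Ioc a b) := by
      have h1 : IntervalIntegrable φ volume (t - b) (t - a) :=
        hφii (t - b) (t - a) (by linarith) (by linarith) (by linarith)
      have h2 := (h1.comp_sub_left t).symm
      simp only [sub_sub_cancel] at h2
      rw [intervalIntegrable_iff_integrableOn_Ioc_of_le hab] at h2
      exact h2
    obtain ⟨M, hM⟩ := hubdd T hT.le
    have hub : ∀ᵐ s ∂(volume.restrict (Ioc a b)), ‖u s‖ ≤ max M 0 := by
      refine (ae_restrict_iff' measurableSet_Ioc).2 (ae_of_all _ fun s hs => ?_)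
      have hs0 : 0 ≤ s := ha.trans hs.1.le
      rw [Real.norm_eq_abs, abs_of_nonneg (hu0 s hs0)]
      exact le_max_of_le_left (hM s ⟨hs0, hs.2.trans (hbt.trans htT)⟩)
    have := hφc.bdd_mul (c := max M 0) humeas.aestronglyMeasurable hub
    exact this.congr (ae_of_all _ fun s => mul_comm _ _)
  -- main induction
  have key : ∀ k : ℕ, ∀ t ∈ Icc (0:ℝ) T, t ≤ k * δ →
      u t ≤ (2 * A + 2) ^ (k + 1) * G := by
    intro k
    induction k with
    | zero =>
      intro t ht htk
      have ht0 : t = 0 := le_antisymm (by simpa using htk) ht.1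
      subst ht0
      have := hineq 0 le_rfl
      simp only [intervalIntegral.integral_same, add_zero] at this
      calc u 0 ≤ g 0 := this
        _ ≤ G := hGle 0 ⟨le_refl _, hT.le⟩
        _ ≤ (2 * A + 2) ^ (0 + 1) * G := by
            rw [pow_one]; nlinarith
    | succ k ih =>
      intro t ht htk
      set τ : ℝ := min ((k + 1 : ℕ) * δ) T with hτdef
      have hτ0 : 0 ≤ τ := le_min (by positivity) hT.le
      have hτT : τ ≤ T := min_le_right _ _
      set B : ℝ := sSup (u '' Icc (0:ℝ) τ) with hBdef
      have hBbdd : BddAbove (u '' Icc (0:ℝ) τ) := by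
        obtain ⟨M, hM⟩ := hubdd τ hτ0
        exact ⟨M, fun y ⟨x, hx, hxy⟩ => hxy ▸ hM x hx⟩
      have hBle : ∀ s ∈ Icc (0:ℝ) τ, u s ≤ B := fun s hs => le_csSup hBbdd ⟨s, hs, rfl⟩
      have hB0 : 0 ≤ B := le_trans (hu0 0 le_rfl) (hBle 0 ⟨le_refl _, hτ0⟩)
      set c : ℝ := (2 * A + 2) ^ (k + 1) with hcdef
      have hc0 : 0 ≤ c := by positivity
      -- the pointwise bound on [0, τ]
      have hpt : ∀ r ∈ Icc (0:ℝ) τ, u r ≤ G + c * G * A + B * (1 / 2) := by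
        intro r hr
        have hr0 : 0 ≤ r := hr.1
        have hrτ : r ≤ τ := hr.2
        have hrT : r ≤ T := hrτ.trans hτT
        have hrk : r ≤ (k + 1 : ℕ) * δ := hrτ.trans (min_le_left _ _)
        set r₀ : ℝ := max (r - δ) 0 with hr₀def
        have hr₀0 : 0 ≤ r₀ := le_max_right _ _
        have hr₀r : r₀ ≤ r := max_le (by linarith) hr0
        have hr₀k : r₀ ≤ (k : ℕ) * δ := by
          refine max_le ?_ (by positivity)
          push_cast at hrk ⊢
          linarith
        have hrr₀δ : r - r₀ ≤ δ := by
          have : r - δ ≤ r₀ := le_max_left _ _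
          linarith
        -- split the integral
        have hi1 : IntervalIntegrable (fun s => φ (r - s) * u s) volume 0 r₀ :=
          hconv r 0 r₀ le_rfl hr₀0 hr₀r hrT
        have hi2 : IntervalIntegrable (fun s => φ (r - s) * u s) volume r₀ r :=
          hconv r r₀ r hr₀0 hr₀r le_rfl hrT
        have hsplit : (∫ s in (0:ℝ)..r, φ (r - s) * u s)
            = (∫ s in (0:ℝ)..r₀, φ (r - s) * u s) + ∫ s in r₀..r, φ (r - s) * u s :=
          (intervalIntegral.integral_add_adjacent_intervals hi1 hi2).symm
        -- bound first piece
        have hφri : ∀ a b : ℝ, 0 ≤ a → a ≤ b → b ≤ r →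
            IntervalIntegrable (fun s => φ (r - s)) volume a b := by
          intro a b ha hab hbr
          have h1 : IntervalIntegrable φ volume (r - b) (r - a) :=
            hφii (r - b) (r - a) (by linarith) (by linarith) (by linarith)
          have h2 := (h1.comp_sub_left r).symm
          simpa only [sub_sub_cancel] using h2
        have hb1 : (∫ s in (0:ℝ)..r₀, φ (r - s) * u s) ≤ c * G * A := by
          have hmono : (∫ s in (0:ℝ)..r₀, φ (r - s) * u s)
              ≤ ∫ s in (0:ℝ)..r₀, φ (r - s) * (c * G) := by
            refine intervalIntegral.integral_mono_on hr₀0 hi1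
              ((hφri 0 r₀ le_rfl hr₀0 hr₀r).mul_const _) fun s hs => ?_
            have hφs : 0 ≤ φ (r - s) := hφ0 _ (by cases hs; linarith)
            refine mul_le_mul_of_nonneg_left ?_ hφs
            exact ih s ⟨hs.1, (hs.2.trans hr₀r).trans hrT⟩ (hs.2.trans hr₀k)
          have heq : (∫ s in (0:ℝ)..r₀, φ (r - s) * (c * G))
              = (∫ s in (r - r₀)..r, φ s) * (c * G) := by
            rw [intervalIntegral.integral_mul_const, intervalIntegral.integral_comp_sub_left φ r,
              sub_zero]
          have hile : (∫ s in (r - r₀)..r, φ s) ≤ A := by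
            rw [hAdef]
            exact intervalIntegral.integral_mono_interval (by linarith) (by linarith) hrT
              (hφae 0 T le_rfl) (hφii 0 T le_rfl hT.le le_rfl)
          calc (∫ s in (0:ℝ)..r₀, φ (r - s) * u s)
              ≤ (∫ s in (r - r₀)..r, φ s) * (c * G) := by rw [← heq]; exact hmono
            _ ≤ A * (c * G) := mul_le_mul_of_nonneg_right hile (by positivity)
            _ = c * G * A := by ring
        -- bound second piece
        have hb2 : (∫ s in r₀..r, φ (r - s) * u s) ≤ B * (1 / 2) := by
          have hmono : (∫ s in r₀..r, φ (r - s) * u s)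
              ≤ ∫ s in r₀..r, φ (r - s) * B := by
            refine intervalIntegral.integral_mono_on hr₀r hi2
              ((hφri r₀ r hr₀0 hr₀r le_rfl).mul_const _) fun s hs => ?_
            have hφs : 0 ≤ φ (r - s) := hφ0 _ (by cases hs; linarith)
            refine mul_le_mul_of_nonneg_left ?_ hφs
            exact hBle s ⟨hr₀0.trans hs.1, hs.2.trans hrτ⟩
          have heq : (∫ s in r₀..r, φ (r - s) * B)
              = (∫ s in (0:ℝ)..(r - r₀), φ s) * B := by
            rw [intervalIntegral.integral_mul_const, intervalIntegral.integral_comp_sub_left φ r,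
              sub_self]
          have hile : (∫ s in (0:ℝ)..(r - r₀), φ s) ≤ ∫ s in (0:ℝ)..δ, φ s :=
            intervalIntegral.integral_mono_interval le_rfl (by linarith) hrr₀δ
              (hφae 0 δ le_rfl) (hφii 0 δ le_rfl hδ0.le hδT)
          have hφnn : 0 ≤ ∫ s in (0:ℝ)..(r - r₀), φ s :=
            intervalIntegral.integral_nonneg (by linarith) fun s hs => hφ0 s hs.1
          calc (∫ s in r₀..r, φ (r - s) * u s)
              ≤ (∫ s in (0:ℝ)..(r - r₀), φ s) * B := by rw [← heq]; exact hmono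
            _ ≤ (1 / 2) * B := mul_le_mul_of_nonneg_right (hile.trans hδhalf) hB0
            _ = B * (1 / 2) := by ring
        calc u r ≤ g r + ∫ s in (0:ℝ)..r, φ (r - s) * u s := hineq r hr0
          _ = g r + ((∫ s in (0:ℝ)..r₀, φ (r - s) * u s) + ∫ s in r₀..r, φ (r - s) * u s) := by
              rw [hsplit]
          _ ≤ G + (c * G * A + B * (1 / 2)) :=
              add_le_add (hGle r ⟨hr0, hrT⟩) (add_le_add hb1 hb2)
          _ = G + c * G * A + B * (1 / 2) := by ring
      -- take sup: B ≤ 2G + 2AcG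
      have hBbound : B ≤ 2 * G + 2 * A * c * G := by
        have : B ≤ G + c * G * A + B * (1 / 2) := by
          refine csSup_le ⟨u 0, 0, ⟨le_refl _, hτ0⟩, rfl⟩ ?_
          rintro y ⟨x, hx, rfl⟩
          exact hpt x hx
        linarith
      have htmem : t ∈ Icc (0:ℝ) τ := ⟨ht.1, le_min htk ht.2⟩
      calc u t ≤ B := hBle t htmem
        _ ≤ 2 * G + 2 * A * c * G := hBbound
        _ ≤ (2 * A + 2) ^ (k + 1 + 1) * G := by
            have h1 : (1:ℝ) ≤ c := one_le_pow₀ hbase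
            have : (2 * A + 2) ^ (k + 1 + 1) = (2 * A + 2) * c := by rw [hcdef]; ring
            rw [this]
            nlinarith
      -- end succ
  intro t ht
  exact key N t ht (ht.2.trans hN)
end

section
/- Let φ:[0,∞)→[0,∞) be locally integrable and let (uⁿ)_{n≥0} be a sequence of measurable, locally bounded, nonnegative functions on [0,∞) such that u^{n+1}_t ≤ ∫₀ᵗ φ(t−s) uⁿ_s ds for all n≥0 and all t≥0. Then for every T>0, sup_{t∈[0,T]} ∑_{n≥0} uⁿ_t < ∞; in fact sup_{t∈[0,T]} ∑_{n≥0} uⁿ_t ≤ C_T for a constant C_T depending only on T, u⁰ and φ. -/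
open MeasureTheory Set intervalIntegral

set_option maxHeartbeats 1000000 in
/-- **generalized Grönwall lemma, part (ii).**
Let `φ : [0,∞) → [0,∞)` be locally integrable and `(uⁿ)` a sequence of measurable, locally
bounded, nonnegative functions with `u^{n+1} t ≤ ∫₀ᵗ φ(t-s) uⁿ s ds` for all `n, t ≥ 0`.
Then for every `T > 0` there is a constant `C_T` (depending only on `T`, `u⁰` and `φ`) bounding
`∑_{n≥0} uⁿ t` uniformly on `[0,T]`; in particular the supremum over `[0,T]` of the sum is
finite.  (The bound on all partial sums is equivalent, the terms being nonnegative.) -/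
theorem stmt2 (φ : ℝ → ℝ)
    (hφ0 : ∀ t : ℝ, 0 ≤ t → 0 ≤ φ t)
    (hφint : ∀ T : ℝ, 0 ≤ T → IntegrableOn φ (Icc 0 T))
    (u : ℕ → ℝ → ℝ)
    (humeas : ∀ n, Measurable (u n))
    (hu0 : ∀ n, ∀ t : ℝ, 0 ≤ t → 0 ≤ u n t)
    (hulb : ∀ n, ∀ T : ℝ, 0 ≤ T → ∃ M : ℝ, ∀ t ∈ Icc (0:ℝ) T, u n t ≤ M)
    (hrec : ∀ n, ∀ t : ℝ, 0 ≤ t → u (n + 1) t ≤ ∫ s in (0:ℝ)..t, φ (t - s) * u n s) :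
    ∀ T : ℝ, 0 < T → ∃ C : ℝ,
      ∀ t ∈ Icc (0:ℝ) T,
        (Summable fun n => u n t) ∧ ∑' n, u n t ≤ C := by
  intro T hT
  obtain ⟨M₀, hM₀⟩ := hulb 0 T hT.le
  set M : ℝ := max M₀ 0 with hMdef
  have hMnn : (0:ℝ) ≤ M := le_max_right _ _
  -- φ is interval integrable on [0, T']
  have hφII : ∀ T' : ℝ, 0 ≤ T' → IntervalIntegrable φ volume 0 T' := by
    intro T' hT'
    rw [intervalIntegrable_iff_integrableOn_Ioc_of_le hT']
    exact (hφint T' hT').mono_set Ioc_subset_Icc_self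
  -- choose l with ∫₀ᵀ φ r e^{-l r} dr ≤ 1/2
  obtain ⟨l, hl0, hl⟩ : ∃ l : ℝ, 0 ≤ l ∧
      ∫ r in (0:ℝ)..T, φ r * Real.exp (-l * r) ≤ 1/2 := by
    have hmeas : ∀ n : ℕ, AEStronglyMeasurable
        (fun r => φ r * Real.exp (-(n:ℝ) * r)) (volume.restrict (Ioc 0 T)) := by
      intro n
      exact (((hφint T hT.le).mono_set Ioc_subset_Icc_self).aestronglyMeasurable).mul
        (Continuous.aestronglyMeasurable (by fun_prop))
    have hbound : ∀ n : ℕ, ∀ᵐ r ∂(volume.restrict (Ioc 0 T)),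
        ‖φ r * Real.exp (-(n:ℝ) * r)‖ ≤ φ r := by
      intro n
      filter_upwards [ae_restrict_mem measurableSet_Ioc] with r hr
      have h1 : 0 ≤ φ r := hφ0 r hr.1.le
      have h2 : Real.exp (-(n:ℝ) * r) ≤ 1 := by
        apply Real.exp_le_one_iff.mpr
        have : (0:ℝ) ≤ (n:ℝ) * r := mul_nonneg (Nat.cast_nonneg n) hr.1.le
        linarith
      rw [Real.norm_eq_abs, abs_mul, abs_of_nonneg h1, abs_of_nonneg (Real.exp_pos _).le]
      calc φ r * Real.exp (-(n:ℝ) * r) ≤ φ r * 1 := by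
            exact mul_le_mul_of_nonneg_left h2 h1
        _ = φ r := mul_one _
    have hlim : ∀ᵐ r ∂(volume.restrict (Ioc 0 T)),
        Filter.Tendsto (fun n : ℕ => φ r * Real.exp (-(n:ℝ) * r)) Filter.atTop (nhds 0) := by
      filter_upwards [ae_restrict_mem measurableSet_Ioc] with r hr
      have : Filter.Tendsto (fun n : ℕ => Real.exp (-(n:ℝ) * r)) Filter.atTop (nhds 0) := by
        apply Real.tendsto_exp_atBot.comp
        have : Filter.Tendsto (fun n : ℕ => (n:ℝ)) Filter.atTop Filter.atTop :=
          tendsto_natCast_atTop_atTop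
        simpa using (Filter.tendsto_neg_atBot_iff.mpr (this.atTop_mul_const hr.1))
      simpa using ((tendsto_const_nhds (x := φ r)).mul this)
    have hTend : Filter.Tendsto
        (fun n : ℕ => ∫ r in Ioc (0:ℝ) T, φ r * Real.exp (-(n:ℝ) * r)) Filter.atTop
        (nhds (∫ r in Ioc (0:ℝ) T, (0:ℝ))) := by
      refine tendsto_integral_of_dominated_convergence φ hmeas
        ((hφint T hT.le).mono_set Ioc_subset_Icc_self) hbound hlim
    rw [MeasureTheory.integral_zero] at hTend
    have := hTend.eventually_le_const (show (0:ℝ) < 1/2 by norm_num)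
    obtain ⟨n, hn⟩ := this.exists
    refine ⟨n, Nat.cast_nonneg n, ?_⟩
    rw [intervalIntegral.integral_of_le hT.le]
    exact hn
  -- integrability of r ↦ φ r * exp (-l r) on [0,T]
  have hψII : IntervalIntegrable (fun r => φ r * Real.exp (-l * r)) volume 0 T :=
    (hφII T hT.le).mul_continuousOn (Continuous.continuousOn (by fun_prop))
  have hψnn : ∀ r ∈ Ioc (0:ℝ) T, 0 ≤ φ r * Real.exp (-l * r) := fun r hr =>
    mul_nonneg (hφ0 r hr.1.le) (Real.exp_pos _).le
  -- key induction
  have key : ∀ n, ∀ t ∈ Icc (0:ℝ) T, u n t ≤ M * (1/2)^n * Real.exp (l * t) := by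
    intro n
    induction n with
    | zero =>
      intro t ht
      have h1 : u 0 t ≤ M := le_trans (hM₀ t ht) (le_max_left _ _)
      have h2 : (1:ℝ) ≤ Real.exp (l * t) :=
        Real.one_le_exp (mul_nonneg hl0 ht.1)
      calc u 0 t ≤ M := h1
        _ = M * (1/2)^0 * 1 := by ring
        _ ≤ M * (1/2)^0 * Real.exp (l * t) := by
            apply mul_le_mul_of_nonneg_left h2
            positivity
    | succ n ih =>
      intro t ht
      obtain ⟨ht0, htT⟩ := ht
      set K : ℝ := M * (1/2)^n with hKdef
      have hKnn : 0 ≤ K := by positivity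
      -- dominating function integrable
      have hgII : IntervalIntegrable (fun s => φ (t - s) * (K * Real.exp (l * s)))
          volume 0 t := by
        have h1 : IntervalIntegrable (fun s => φ (t - s)) volume 0 t := by
          have := (hφII t ht0).comp_sub_left t
          simpa using this.symm
        exact h1.mul_continuousOn (Continuous.continuousOn (by fun_prop))
      have hgInt : IntegrableOn (fun s => φ (t - s) * (K * Real.exp (l * s)))
          (Ioc 0 t) volume :=
        (intervalIntegrable_iff_integrableOn_Ioc_of_le ht0).mp hgII
      have step1 : u (n+1) t ≤ ∫ s in (0:ℝ)..t, φ (t - s) * (K * Real.exp (l * s)) := by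
        refine le_trans (hrec n t ht0) ?_
        rw [intervalIntegral.integral_of_le ht0, intervalIntegral.integral_of_le ht0]
        refine MeasureTheory.integral_mono_of_nonneg ?_ hgInt ?_
        · filter_upwards [ae_restrict_mem measurableSet_Ioc] with s hs
          exact mul_nonneg (hφ0 _ (by linarith [hs.2])) (hu0 n s hs.1.le)
        · filter_upwards [ae_restrict_mem measurableSet_Ioc] with s hs
          have hsT : s ∈ Icc (0:ℝ) T := ⟨hs.1.le, le_trans hs.2 htT⟩
          exact mul_le_mul_of_nonneg_left (ih s hsT) (hφ0 _ (by linarith [hs.2]))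
      -- substitution: ∫₀ᵗ φ(t-s) K e^{ls} ds = K e^{lt} ∫₀ᵗ φ r e^{-lr} dr
      have step2 : (∫ s in (0:ℝ)..t, φ (t - s) * (K * Real.exp (l * s)))
          = K * Real.exp (l * t) * ∫ r in (0:ℝ)..t, φ r * Real.exp (-l * r) := by
        have hsub := intervalIntegral.integral_comp_sub_left
          (a := (0:ℝ)) (b := t) (fun r => φ r * (K * Real.exp (l * (t - r)))) t
        simp only [sub_zero, sub_self] at hsub
        have heq : (∫ s in (0:ℝ)..t, φ (t - s) * (K * Real.exp (l * s)))
            = ∫ s in (0:ℝ)..t, φ (t - s) * (K * Real.exp (l * (t - (t - s)))) := by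
          congr 1
          ext s
          congr 3
          ring
        rw [heq, hsub]
        rw [← intervalIntegral.integral_const_mul]
        congr 1
        ext r
        rw [show l * (t - r) = l * t + (-l * r) by ring, Real.exp_add]
        ring
      have step3 : (∫ r in (0:ℝ)..t, φ r * Real.exp (-l * r)) ≤ 1/2 := by
        refine le_trans ?_ hl
        apply intervalIntegral.integral_mono_interval le_rfl ht0 htT ?_ hψII
        filter_upwards [ae_restrict_mem measurableSet_Ioc] with r hr
        exact hψnn r hr
      calc u (n+1) t ≤ K * Real.exp (l * t) * ∫ r in (0:ℝ)..t, φ r * Real.exp (-l * r) := by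
            rw [← step2]; exact step1
        _ ≤ K * Real.exp (l * t) * (1/2) := by
            apply mul_le_mul_of_nonneg_left step3
            positivity
        _ = M * (1/2)^(n+1) * Real.exp (l * t) := by
            rw [hKdef]; ring
  -- conclude
  refine ⟨2 * M * Real.exp (l * T), ?_⟩
  intro t ht
  have hbnd : ∀ n, u n t ≤ M * Real.exp (l * T) * (1/2)^n := by
    intro n
    calc u n t ≤ M * (1/2)^n * Real.exp (l * t) := key n t ht
      _ ≤ M * (1/2)^n * Real.exp (l * T) := by
          apply mul_le_mul_of_nonneg_left
          · exact Real.exp_le_exp.mpr (mul_le_mul_of_nonneg_left ht.2 hl0)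
          · positivity
      _ = M * Real.exp (l * T) * (1/2)^n := by ring
  have hgeo : Summable (fun n : ℕ => M * Real.exp (l * T) * (1/2)^n) :=
    (summable_geometric_of_lt_one (by norm_num) (by norm_num)).mul_left _
  have hsum : Summable fun n => u n t :=
    Summable.of_nonneg_of_le (fun n => hu0 n t ht.1) hbnd hgeo
  refine ⟨hsum, ?_⟩
  calc ∑' n, u n t ≤ ∑' n : ℕ, M * Real.exp (l * T) * (1/2)^n :=
        Summable.tsum_le_tsum hbnd hsum hgeo
    _ = M * Real.exp (l * T) * ∑' n : ℕ, ((1:ℝ)/2)^n := tsum_mul_left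
    _ = M * Real.exp (l * T) * 2 := by
        rw [tsum_geometric_of_lt_one (by norm_num) (by norm_num)]
        norm_num
    _ = 2 * M * Real.exp (l * T) := by ring
end

section
/- Let φ:[0,∞)→[0,∞) be locally integrable, g:[0,∞)→[0,∞) be locally bounded, and let (uⁿ)_{n≥0} be a sequence of measurable, locally bounded, nonnegative functions on [0,∞) such that u^{n+1}_t ≤ g_t + ∫₀ᵗ φ(t−s) uⁿ_s ds for all n≥0 and all t≥0. Then for every T>0, sup_{n≥0} sup_{t∈[0,T]} uⁿ_t < ∞; in fact this quantity is bounded by a constant C_T depending only on T, u⁰, g and φ. -/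
open MeasureTheory Set intervalIntegral Filter Topology

/-!
Bielecki's weighted-norm trick: by dominated convergence choose `k ≥ 0` with
`∫₀ᵀ e^{-kr} φ(r) dr ≤ 1/2`, and take `C ≥ 0` above `sup u⁰` and `2 sup g` on `[0,T]`.
Since `∫₀ᵗ φ(t-s) C e^{ks} ds = C e^{kt} ∫₀ᵗ e^{-kr} φ(r) dr ≤ C e^{kt} / 2`, the bound
`uⁿ_t ≤ C e^{kt}` on `[0,T]` passes from `n` to `n + 1`, so `C e^{kT}` bounds every `uⁿ`.
-/

theorem intervalIntegral.integral_mono_on_of_nonneg_right {f g : ℝ → ℝ} {a b : ℝ} (hab : a ≤ b)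
    (hg : IntervalIntegrable g volume a b) (hg0 : ∀ x ∈ Icc a b, 0 ≤ g x)
    (hfg : ∀ x ∈ Icc a b, f x ≤ g x) : ∫ x in a..b, f x ≤ ∫ x in a..b, g x := by
  by_cases hf : IntervalIntegrable f volume a b
  · exact integral_mono_on hab hf hg hfg
  · rw [integral_undef hf]
    exact integral_nonneg hab hg0

theorem tendsto_integral_exp_neg_mul_mul_atTop {φ : ℝ → ℝ} {T : ℝ} (hT : 0 ≤ T)
    (hφ : IntervalIntegrable φ volume 0 T) :
    Tendsto (fun k : ℝ => ∫ r in 0..T, Real.exp (-k * r) * φ r) atTop (𝓝 0) := by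
  have hlim := tendsto_integral_filter_of_dominated_convergence (μ := volume) (a := 0) (b := T)
    (l := atTop) (F := fun (k : ℝ) (r : ℝ) => Real.exp (-k * r) * φ r) (f := fun _ => 0)
    (fun r => ‖φ r‖) ?_ ?_ hφ.norm ?_
  · simpa using hlim
  · exact Eventually.of_forall fun k =>
      (by fun_prop : Continuous fun r : ℝ => Real.exp (-k * r)).aestronglyMeasurable.mul
        hφ.def'.aestronglyMeasurable
  · filter_upwards [eventually_ge_atTop 0] with k hk
    refine ae_of_all _ fun r hr => ?_
    rw [uIoc_of_le hT] at hr
    rw [norm_mul, Real.norm_of_nonneg (Real.exp_pos _).le]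
    refine mul_le_of_le_one_left (norm_nonneg _) (Real.exp_le_one_iff.2 ?_)
    nlinarith [hr.1]
  · refine ae_of_all _ fun r hr => ?_
    rw [uIoc_of_le hT] at hr
    have hexp : Tendsto (fun k : ℝ => Real.exp (-k * r)) atTop (𝓝 0) :=
      Real.tendsto_exp_atBot.comp (tendsto_neg_atTop_atBot.atBot_mul_const hr.1)
    simpa using hexp.mul_const (φ r)

theorem integral_comp_sub_mul_exp (φ : ℝ → ℝ) (k t : ℝ) :
    ∫ s in 0..t, φ (t - s) * Real.exp (k * s) =
      Real.exp (k * t) * ∫ r in 0..t, Real.exp (-k * r) * φ r := by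
  have hsub := integral_comp_sub_left (a := 0) (b := t)
    (fun r => φ r * Real.exp (k * (t - r))) t
  simp only [sub_sub_cancel, sub_self, sub_zero] at hsub
  rw [hsub, ← intervalIntegral.integral_const_mul]
  refine integral_congr fun r _ => ?_
  rw [mul_sub, sub_eq_add_neg, Real.exp_add, ← neg_mul]
  ring

theorem integral_comp_sub_mul_le_of_le_mul_exp {φ v : ℝ → ℝ} {C k t : ℝ} (ht : 0 ≤ t)
    (hC : 0 ≤ C) (hφ : IntervalIntegrable φ volume 0 t) (hφ0 : ∀ r ∈ Icc 0 t, 0 ≤ φ r)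
    (hv : ∀ s ∈ Icc 0 t, v s ≤ C * Real.exp (k * s)) :
    ∫ s in 0..t, φ (t - s) * v s ≤
      C * Real.exp (k * t) * ∫ r in 0..t, Real.exp (-k * r) * φ r := by
  have hφt : IntervalIntegrable (fun s => φ (t - s)) volume 0 t := by
    simpa using (hφ.comp_sub_left t).symm
  have hφt0 : ∀ s ∈ Icc 0 t, 0 ≤ φ (t - s) := fun s hs =>
    hφ0 (t - s) ⟨sub_nonneg.2 hs.2, by linarith [hs.1]⟩
  calc ∫ s in 0..t, φ (t - s) * v s
      ≤ ∫ s in 0..t, C * (φ (t - s) * Real.exp (k * s)) := by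
        refine integral_mono_on_of_nonneg_right ht
          ((hφt.mul_continuousOn (by fun_prop)).const_mul C) (fun s hs => ?_) (fun s hs => ?_)
        · have := hφt0 s hs
          positivity
        · rw [mul_left_comm]
          exact mul_le_mul_of_nonneg_left (hv s hs) (hφt0 s hs)
    _ = C * Real.exp (k * t) * ∫ r in 0..t, Real.exp (-k * r) * φ r := by
        rw [intervalIntegral.integral_const_mul, integral_comp_sub_mul_exp, mul_assoc]

theorem le_mul_exp_of_le_add_integral_comp_sub_mul {φ g : ℝ → ℝ} {u : ℕ → ℝ → ℝ} {T C k : ℝ}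
    (hC : 0 ≤ C) (hk : 0 ≤ k) (hφ : IntervalIntegrable φ volume 0 T)
    (hφ0 : ∀ r ∈ Icc 0 T, 0 ≤ φ r)
    (hkernel : ∫ r in 0..T, Real.exp (-k * r) * φ r ≤ 1 / 2)
    (hg : ∀ t ∈ Icc 0 T, g t ≤ C / 2) (hu₀ : ∀ t ∈ Icc 0 T, u 0 t ≤ C)
    (hrec : ∀ n, ∀ t ∈ Icc 0 T, u (n + 1) t ≤ g t + ∫ s in 0..t, φ (t - s) * u n s) :
    ∀ n, ∀ t ∈ Icc 0 T, u n t ≤ C * Real.exp (k * t) := by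
  intro n
  induction n with
  | zero =>
    intro t ht
    exact (hu₀ t ht).trans (le_mul_of_one_le_right hC (Real.one_le_exp (mul_nonneg hk ht.1)))
  | succ n ih =>
    intro t ht
    have hkernel_t : ∫ r in 0..t, Real.exp (-k * r) * φ r ≤ 1 / 2 :=
      (integral_mono_interval le_rfl ht.1 ht.2
        ((ae_restrict_mem measurableSet_Ioc).mono fun r hr =>
          mul_nonneg (Real.exp_pos _).le (hφ0 r (Ioc_subset_Icc_self hr)))
        (hφ.continuousOn_mul (by fun_prop))).trans hkernel
    have hconv := integral_comp_sub_mul_le_of_le_mul_exp ht.1 hC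
      (hφ.mono_set (uIcc_subset_uIcc_left (mem_uIcc_of_le ht.1 ht.2)))
      (fun r hr => hφ0 r ⟨hr.1, hr.2.trans ht.2⟩) (fun s hs => ih s ⟨hs.1, hs.2.trans ht.2⟩)
    have hexp : 1 ≤ Real.exp (k * t) := Real.one_le_exp (mul_nonneg hk ht.1)
    calc u (n + 1) t ≤ g t + ∫ s in 0..t, φ (t - s) * u n s := hrec n t ht
      _ ≤ C / 2 + C * Real.exp (k * t) * (1 / 2) := by
        gcongr
        · exact hg t ht
        · exact hconv.trans (by gcongr)
      _ ≤ C * Real.exp (k * t) := by nlinarith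

theorem stmt3_general (φ g : ℝ → ℝ)
    (hφ0 : ∀ t : ℝ, 0 ≤ t → 0 ≤ φ t)
    (hφint : ∀ T : ℝ, 0 ≤ T → IntegrableOn φ (Icc 0 T))
    (hglb : ∀ T : ℝ, 0 ≤ T → ∃ M : ℝ, ∀ t ∈ Icc (0:ℝ) T, g t ≤ M)
    (u : ℕ → ℝ → ℝ)
    (hulb : ∀ n, ∀ T : ℝ, 0 ≤ T → ∃ M : ℝ, ∀ t ∈ Icc (0:ℝ) T, u n t ≤ M)
    (hrec : ∀ n, ∀ t : ℝ, 0 ≤ t → u (n + 1) t ≤ g t + ∫ s in (0:ℝ)..t, φ (t - s) * u n s) :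
    ∀ T : ℝ, 0 < T → ∃ C : ℝ, ∀ n, ∀ t ∈ Icc (0:ℝ) T, u n t ≤ C := by
  intro T hT
  obtain ⟨Mg, hMg⟩ := hglb T hT.le
  obtain ⟨M₀, hM₀⟩ := hulb 0 T hT.le
  have hφT : IntervalIntegrable φ volume 0 T :=
    (uIcc_of_le hT.le ▸ hφint T hT.le).intervalIntegrable
  obtain ⟨k, hkernel, hk⟩ := (((tendsto_integral_exp_neg_mul_mul_atTop hT.le hφT).eventually
    (eventually_le_nhds one_half_pos)).and (eventually_ge_atTop 0)).exists
  set C := max (max M₀ (2 * Mg)) 0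
  have hbound := le_mul_exp_of_le_add_integral_comp_sub_mul (C := C) (le_max_right _ 0) hk hφT
    (fun r hr => hφ0 r hr.1) hkernel
    (fun t ht => by linarith [hMg t ht, le_max_right M₀ (2 * Mg), le_max_left (max M₀ (2 * Mg)) 0])
    (fun t ht => (hM₀ t ht).trans ((le_max_left _ _).trans (le_max_left _ _)))
    (fun n t ht => hrec n t ht.1)
  exact ⟨C * Real.exp (k * T), fun n t ht =>
    (hbound n t ht).trans (by gcongr; exact ht.2)⟩

/-- **generalized Grönwall lemma, part (iii).**
Let `φ : [0,∞) → [0,∞)` be locally integrable, `g : [0,∞) → [0,∞)` locally bounded, and `(uⁿ)`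
a sequence of measurable, locally bounded, nonnegative functions with
`u^{n+1} t ≤ g t + ∫₀ᵗ φ(t-s) uⁿ s ds` for all `n, t ≥ 0`.  Then for every `T > 0`,
`sup_n sup_{[0,T]} uⁿ` is bounded by a constant `C_T` depending only on `T`, `u⁰`, `g`, `φ`. -/
theorem stmt3 (φ g : ℝ → ℝ)
    (hφ0 : ∀ t : ℝ, 0 ≤ t → 0 ≤ φ t)
    (hφint : ∀ T : ℝ, 0 ≤ T → IntegrableOn φ (Icc 0 T))
    (hg0 : ∀ t : ℝ, 0 ≤ t → 0 ≤ g t)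
    (hglb : ∀ T : ℝ, 0 ≤ T → ∃ M : ℝ, ∀ t ∈ Icc (0:ℝ) T, g t ≤ M)
    (u : ℕ → ℝ → ℝ)
    (humeas : ∀ n, Measurable (u n))
    (hu0 : ∀ n, ∀ t : ℝ, 0 ≤ t → 0 ≤ u n t)
    (hulb : ∀ n, ∀ T : ℝ, 0 ≤ T → ∃ M : ℝ, ∀ t ∈ Icc (0:ℝ) T, u n t ≤ M)
    (hrec : ∀ n, ∀ t : ℝ, 0 ≤ t → u (n + 1) t ≤ g t + ∫ s in (0:ℝ)..t, φ (t - s) * u n s) :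
    ∀ T : ℝ, 0 < T → ∃ C : ℝ, ∀ n, ∀ t ∈ Icc (0:ℝ) T, u n t ≤ C :=
  stmt3_general φ g hφ0 hφint hglb u hulb hrec
end

section
/- Let μ>0 and let φ:[0,∞)→[0,∞) be measurable with Λ = ∫₀^∞ φ(s) ds < 1. Let m be the unique nondecreasing locally bounded solution of m_t = μt + ∫₀ᵗ φ(t−s) m_s ds (which is of class C¹ on [0,∞)). Then, as t→∞, m′_t → μ/(1−Λ) and m_t/t → μ/(1−Λ). -/
/-!
Extending `m` by `m 0 = 0` to negative times turns the convolution into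
`∫_{(0,∞)} φ u m (t - u) du`, an integral over a fixed domain whose integrand is Lipschitz in `t`;
differentiating under the integral shows that `f = 1_{[0,∞)} m'` solves the renewal equation
`f t = μ + ∫_{(0,∞)} φ u f (t - u) du`. Taking the supremum of `f` over `(-∞, T]`
gives `f ≤ c := μ / (1 - Λ)`. Then `g = c - f ≥ 0` solves `g t = ∫ φ u g (t - u) du`; bounding
`g (t - u)` by `limsup g + ε` except on the tail of `φ` yields `limsup g ≤ Λ limsup g`,
so `g → 0`. Finally `m t / t → c` by the mean value inequality.
-/

open MeasureTheory Set Filter Topology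
open scoped NNReal

theorem measurable_indicator_Ici_of_continuousOn {f : ℝ → ℝ} (hf : ContinuousOn f (Ici 0)) :
    Measurable ((Ici (0:ℝ)).indicator f) := by
  rw [← piecewise_eq_indicator]
  exact hf.measurable_piecewise continuousOn_const measurableSet_Ici

theorem bddAbove_indicator_Ici_image_Iic {f : ℝ → ℝ} (hf : ContinuousOn f (Ici 0)) (T : ℝ) :
    BddAbove ((Ici 0).indicator f '' Iic T) := by
  obtain ⟨C, hC⟩ := isCompact_Icc.exists_bound_of_continuousOn
    (hf.mono (Icc_subset_Ici_self : Icc (0:ℝ) T ⊆ Ici 0))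
  refine ⟨max C 0, ?_⟩
  rintro _ ⟨y, hy, rfl⟩
  by_cases h : y ∈ Ici 0
  · rw [indicator_of_mem h]
    exact ((le_abs_self _).trans (hC y ⟨h, hy⟩)).trans (le_max_left _ _)
  · rw [indicator_of_notMem h]
    exact le_max_right _ _

theorem hasDerivAt_setIntegral_Ioi_mul_comp_sub {φ g g' : ℝ → ℝ} {t : ℝ} {K : ℝ≥0}
    (hφ : IntegrableOn φ (Ioi 0)) (hg : Continuous g)
    (hg_int : IntegrableOn (fun u => φ u * g (t - u)) (Ioi 0))
    (hg_lip : LipschitzOnWith K g (Iic (t + 1))) (hg' : Measurable g')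
    (hg_deriv : ∀ y ≠ 0, HasDerivAt g (g' y) y) :
    HasDerivAt (fun x => ∫ u in Ioi 0, φ u * g (x - u))
      (∫ u in Ioi 0, φ u * g' (t - u)) t := by
  refine (hasDerivAt_integral_of_dominated_loc_of_lip (Metric.ball_mem_nhds t one_pos)
    (F := fun x u => φ u * g (x - u)) (bound := fun u => |φ u| * K)
    (.of_forall fun x => ?_) hg_int ?_ ?_
    (hφ.norm.mul_const _) ?_).2
  · exact hφ.aestronglyMeasurable.mul
      (hg.comp (continuous_const.sub continuous_id)).aestronglyMeasurable
  · exact hφ.aestronglyMeasurable.mul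
      (hg'.comp (measurable_const.sub measurable_id)).aestronglyMeasurable
  · filter_upwards [ae_restrict_mem measurableSet_Ioi] with u hu
    refine LipschitzOnWith.of_dist_le_mul fun x hx y hy => ?_
    have hmem : ∀ z ∈ Metric.ball t 1, z - u ∈ Iic (t + 1) := fun z hz => by
      rw [Metric.mem_ball, Real.dist_eq, abs_lt] at hz
      rw [mem_Iic]; linarith [mem_Ioi.1 hu]
    rw [Real.dist_eq, ← mul_sub, abs_mul, Real.coe_nnabs, abs_mul, abs_abs, NNReal.abs_eq,
      mul_assoc]
    gcongr
    simpa [Real.dist_eq] using hg_lip.dist_le_mul _ (hmem x hx) _ (hmem y hy)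
  · filter_upwards [ae_restrict_of_ae (Measure.ae_ne volume t)] with u hu
    exact ((hg_deriv _ (sub_ne_zero.2 (Ne.symm hu))).comp_sub_const t u).const_mul (φ u)

section DerivativeEquation

variable {m m' : ℝ → ℝ}

theorem hasDerivAt_comp_max_zero
    (hderiv : ∀ t ∈ Ici (0:ℝ), HasDerivWithinAt m (m' t) (Ici 0) t) {y : ℝ} (hy : y ≠ 0) :
    HasDerivAt (fun x => m (max x 0)) ((Ici 0).indicator m' y) y := by
  rcases hy.lt_or_gt with hy | hy
  · rw [indicator_of_notMem (by simpa using hy)]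
    refine (hasDerivAt_const y (m 0)).congr_of_eventuallyEq ?_
    filter_upwards [Iio_mem_nhds hy] with x hx
    rw [max_eq_right hx.le]
  · rw [indicator_of_mem (mem_Ici.2 hy.le)]
    refine ((hderiv y hy.le).hasDerivAt (Ici_mem_nhds hy)).congr_of_eventuallyEq ?_
    filter_upwards [Ioi_mem_nhds hy] with x hx
    rw [max_eq_left hx.le]

theorem exists_lipschitzOnWith_comp_max_zero
    (hderiv : ∀ t ∈ Ici (0:ℝ), HasDerivWithinAt m (m' t) (Ici 0) t)
    (hderiv_cont : ContinuousOn m' (Ici 0)) (R : ℝ) :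
    ∃ K, LipschitzOnWith K (fun x => m (max x 0)) (Iic R) := by
  obtain ⟨C, hC⟩ := isCompact_Icc.exists_bound_of_continuousOn
    (hderiv_cont.mono (Icc_subset_Ici_self : Icc (0:ℝ) (max R 0) ⊆ Ici 0))
  have hm : LipschitzOnWith C.toNNReal m (Icc 0 (max R 0)) :=
    (convex_Icc _ _).lipschitzOnWith_of_nnnorm_hasDerivWithin_le
      (fun x hx => (hderiv x hx.1).mono Icc_subset_Ici_self) fun x hx => by
        rw [← NNReal.coe_le_coe, coe_nnnorm,
          Real.coe_toNNReal _ ((norm_nonneg _).trans (hC x hx))]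
        exact hC x hx
  exact ⟨_, hm.comp (LipschitzWith.id.max_const 0).lipschitzOnWith
    fun x hx => ⟨le_max_right _ _, max_le_max_right 0 hx⟩⟩

theorem intervalIntegral_mul_comp_sub_eq {φ : ℝ → ℝ} (hm0 : m 0 = 0) {x : ℝ} (hx : 0 ≤ x) :
    ∫ s in (0:ℝ)..x, φ (x - s) * m s = ∫ u in Ioi 0, φ u * m (max (x - u) 0) := by
  have hsub := intervalIntegral.integral_comp_sub_left (a := 0) (b := x)
    (fun u => φ u * m (x - u)) x
  simp only [sub_sub_cancel, sub_zero, sub_self] at hsub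
  rw [hsub, intervalIntegral.integral_of_le hx, setIntegral_eq_of_subset_of_forall_sdiff_eq_zero
    measurableSet_Ioi Ioc_subset_Ioi_self fun u hu => ?_]
  · refine setIntegral_congr_fun measurableSet_Ioc fun u hu => ?_
    rw [max_eq_left (sub_nonneg.2 hu.2)]
  · have hxu : x - u ≤ 0 := by linarith [not_le.1 fun h => hu.2 ⟨hu.1, h⟩]
    rw [max_eq_right hxu, hm0, mul_zero]

theorem eq_add_integral_mul_indicator_comp_sub {φ : ℝ → ℝ} {μ : ℝ}
    (hφ : IntegrableOn φ (Ioi 0))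
    (heq : ∀ t : ℝ, 0 ≤ t → m t = μ * t + ∫ s in (0:ℝ)..t, φ (t - s) * m s)
    (hderiv : ∀ t ∈ Ici (0:ℝ), HasDerivWithinAt m (m' t) (Ici 0) t)
    (hderiv_cont : ContinuousOn m' (Ici 0)) {t : ℝ} (ht : 0 ≤ t) :
    m' t = μ + ∫ u in Ioi 0, φ u * (Ici 0).indicator m' (t - u) := by
  have hmc : ContinuousOn m (Ici 0) := fun x hx => (hderiv x hx).continuousWithinAt
  have hm0 : m 0 = 0 := by simpa using heq 0 le_rfl
  have hg : Continuous fun x => m (max x 0) :=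
    hmc.comp_continuous (continuous_id.max continuous_const) fun x => le_max_right x 0
  obtain ⟨C, hC⟩ := isCompact_Icc.exists_bound_of_continuousOn
    (hmc.mono (Icc_subset_Ici_self : Icc (0:ℝ) t ⊆ Ici 0))
  have hint : IntegrableOn (fun u => φ u * m (max (t - u) 0)) (Ioi 0) :=
    hφ.mul_bdd (hg.comp (continuous_const.sub continuous_id)).aestronglyMeasurable
      (ae_restrict_of_forall_mem measurableSet_Ioi fun u hu =>
        hC _ ⟨le_max_right _ _, max_le (by linarith [mem_Ioi.1 hu]) ht⟩)
  obtain ⟨K, hK⟩ := exists_lipschitzOnWith_comp_max_zero hderiv hderiv_cont (t + 1)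
  have hF := hasDerivAt_setIntegral_Ioi_mul_comp_sub hφ hg hint hK
    (measurable_indicator_Ici_of_continuousOn hderiv_cont)
    fun y hy => hasDerivAt_comp_max_zero hderiv hy
  have hm : HasDerivWithinAt m (μ + ∫ u in Ioi 0, φ u * (Ici 0).indicator m' (t - u))
      (Ici 0) t := by
    have := ((hasDerivAt_id' t).const_mul μ).add hF
    rw [mul_one] at this
    exact this.hasDerivWithinAt.congr (fun x hx => by rw [heq x hx, intervalIntegral_mul_comp_sub_eq hm0 hx]; rfl)
      (by rw [heq t ht, intervalIntegral_mul_comp_sub_eq hm0 ht]; rfl)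
  exact (uniqueDiffOn_Ici 0 t ht).eq_deriv _ (hderiv t ht) hm

end DerivativeEquation

section Renewal

variable {φ : ℝ → ℝ}

theorem le_div_one_sub_of_le_integral_mul_comp_sub {μ : ℝ} {f : ℝ → ℝ}
    (hφ0 : ∀ u, 0 ≤ u → 0 ≤ φ u) (hφ : IntegrableOn φ (Ioi 0))
    (hΛ : ∫ u in Ioi 0, φ u < 1)
    (hf0 : ∀ y, 0 ≤ f y) (hbdd : ∀ T, BddAbove (f '' Iic T))
    (hf : ∀ t, f t ≤ μ + ∫ u in Ioi 0, φ u * f (t - u)) (y : ℝ) :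
    f y ≤ μ / (1 - ∫ u in Ioi 0, φ u) := by
  set Λ := ∫ u in Ioi 0, φ u
  set S := sSup (f '' Iic y)
  have hS : ∀ t ≤ y, f t ≤ S := fun t ht => le_csSup (hbdd y) (mem_image_of_mem f ht)
  have hSS : S ≤ μ + Λ * S := by
    refine csSup_le (image_nonempty.2 nonempty_Iic) ?_
    rintro _ ⟨t, ht, rfl⟩
    refine (hf t).trans ((add_le_add_iff_left μ).2 ?_)
    rw [← integral_mul_const]
    refine integral_mono_of_nonneg ?_ (hφ.mul_const S) ?_
    · filter_upwards [ae_restrict_mem measurableSet_Ioi] with u hu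
      exact mul_nonneg (hφ0 u hu.le) (hf0 _)
    · filter_upwards [ae_restrict_mem measurableSet_Ioi] with u hu
      exact mul_le_mul_of_nonneg_left (hS _ (by linarith [mem_Ioi.1 hu, mem_Iic.1 ht]))
        (hφ0 u hu.le)
  rw [le_div_iff₀ (by linarith)]
  nlinarith [hS y le_rfl]

theorem integral_mul_comp_sub_le {g : ℝ → ℝ} {a B T t : ℝ}
    (hφ0 : ∀ u, 0 ≤ u → 0 ≤ φ u) (hφ : IntegrableOn φ (Ioi 0))
    (hg0 : ∀ y, 0 ≤ g y) (hgB : ∀ y, g y ≤ B) (ha : 0 ≤ a) (hga : ∀ y ≥ T, g y ≤ a)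
    (ht : T ≤ t) :
    ∫ u in Ioi 0, φ u * g (t - u) ≤ a * (∫ u in Ioi 0, φ u) + B * ∫ u in Ioi (t - T), φ u := by
  have hind : IntegrableOn ((Ioi (t - T)).indicator φ) (Ioi 0) :=
    hφ.indicator measurableSet_Ioi
  have hrhs : a * (∫ u in Ioi 0, φ u) + B * ∫ u in Ioi (t - T), φ u =
      ∫ u in Ioi 0, (a * φ u + B * (Ioi (t - T)).indicator φ u) := by
    rw [integral_add (hφ.const_mul a) (hind.const_mul B), integral_const_mul, integral_const_mul,
      setIntegral_indicator measurableSet_Ioi, Ioi_inter_Ioi, max_eq_right (sub_nonneg.2 ht)]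
  rw [hrhs]
  refine integral_mono_of_nonneg ?_ ((hφ.const_mul a).add (hind.const_mul B)) ?_
  · filter_upwards [ae_restrict_mem measurableSet_Ioi] with u hu
    exact mul_nonneg (hφ0 u hu.le) (hg0 _)
  · filter_upwards [ae_restrict_mem measurableSet_Ioi] with u hu
    have hφu := hφ0 u hu.le
    by_cases hu' : u ∈ Ioi (t - T)
    · rw [indicator_of_mem hu']
      nlinarith [hgB (t - u)]
    · rw [indicator_of_notMem hu']
      rw [mem_Ioi, not_lt] at hu'
      nlinarith [hga (t - u) (by linarith)]

theorem tendsto_zero_of_le_integral_mul_comp_sub {g : ℝ → ℝ} {B : ℝ}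
    (hφ0 : ∀ u, 0 ≤ u → 0 ≤ φ u) (hφ : IntegrableOn φ (Ioi 0))
    (hΛ : ∫ u in Ioi 0, φ u < 1) (hg0 : ∀ y, 0 ≤ g y) (hgB : ∀ y, g y ≤ B)
    (hg : ∀ᶠ t in atTop, g t ≤ ∫ u in Ioi 0, φ u * g (t - u)) :
    Tendsto g atTop (𝓝 0) := by
  set Λ := ∫ u in Ioi 0, φ u
  have hbdd : IsBoundedUnder (· ≤ ·) atTop g :=
    isBoundedUnder_of_eventually_le (.of_forall hgB)
  have hbdd' : IsBoundedUnder (· ≥ ·) atTop g :=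
    isBoundedUnder_of_eventually_ge (.of_forall hg0)
  set G := limsup g atTop
  have hG0 : 0 ≤ G := le_limsup_of_frequently_le (.of_forall hg0)
  have hGε : ∀ ε > 0, G ≤ (G + ε) * Λ := by
    intro ε hε
    obtain ⟨T, hT⟩ := eventually_atTop.1 (eventually_lt_of_limsup_lt (lt_add_of_pos_right G hε))
    have htail : Tendsto (fun t => (G + ε) * Λ + B * ∫ u in Ioi (t - T), φ u) atTop
        (𝓝 ((G + ε) * Λ)) := by
      simpa [sub_eq_add_neg] using tendsto_const_nhds.add
        ((tendsto_integral_Ioi_zero (tendsto_atTop_add_const_right _ _ tendsto_id)).const_mul B)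
    calc G ≤ limsup (fun t => (G + ε) * Λ + B * ∫ u in Ioi (t - T), φ u) atTop := by
          refine limsup_le_limsup ?_ hbdd'.isCoboundedUnder_le htail.isBoundedUnder_le
          filter_upwards [hg, eventually_ge_atTop T] with t hgt htT
          exact hgt.trans (integral_mul_comp_sub_le hφ0 hφ hg0 hgB (by positivity)
            (fun y hy => (hT y hy).le) htT)
      _ = (G + ε) * Λ := htail.limsup_eq
  have hGΛ : G ≤ G * Λ := le_of_forall_pos_le_add fun ε hε => by nlinarith [hGε ε hε]
  refine tendsto_of_le_liminf_of_limsup_le (le_liminf_of_le hbdd.isCoboundedUnder_ge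
    (.of_forall hg0)) ?_ hbdd hbdd'
  nlinarith

theorem tendsto_of_eq_add_integral_mul_comp_sub {f : ℝ → ℝ} {μ : ℝ} (hμ : 0 ≤ μ)
    (hφ0 : ∀ u, 0 ≤ u → 0 ≤ φ u) (hφ : IntegrableOn φ (Ioi 0))
    (hΛ : ∫ u in Ioi 0, φ u < 1)
    (hf_meas : Measurable f) (hf0 : ∀ y, 0 ≤ f y) (hf_neg : ∀ y < 0, f y = 0)
    (hbdd : ∀ T, BddAbove (f '' Iic T))
    (hf : ∀ t, 0 ≤ t → f t = μ + ∫ u in Ioi 0, φ u * f (t - u)) :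
    Tendsto f atTop (𝓝 (μ / (1 - ∫ u in Ioi 0, φ u))) := by
  set Λ := ∫ u in Ioi 0, φ u
  set c := μ / (1 - Λ)
  have hfc : ∀ y, f y ≤ c := by
    refine le_div_one_sub_of_le_integral_mul_comp_sub hφ0 hφ hΛ hf0 hbdd fun t => ?_
    rcases le_or_gt 0 t with ht | ht
    · exact (hf t ht).le
    · rw [hf_neg t ht, setIntegral_eq_zero_of_forall_eq_zero fun u hu => by
        rw [hf_neg _ (by linarith [mem_Ioi.1 hu]), mul_zero], add_zero]
      exact hμ
  have hint : ∀ t, IntegrableOn (fun u => φ u * f (t - u)) (Ioi 0) := fun t =>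
    hφ.mul_bdd (hf_meas.comp (measurable_const.sub measurable_id)).aestronglyMeasurable
      (.of_forall fun u => by rw [Real.norm_of_nonneg (hf0 _)]; exact hfc _)
  -- `c - f` solves the homogeneous equation, because `c - μ = c Λ`
  have hgap : Tendsto (fun t => c - f t) atTop (𝓝 0) := by
    refine tendsto_zero_of_le_integral_mul_comp_sub (B := c) hφ0 hφ hΛ
      (fun y => sub_nonneg.2 (hfc y)) (fun y => by linarith [hf0 y]) ?_
    filter_upwards [eventually_ge_atTop 0] with t ht
    simp_rw [mul_sub]
    rw [integral_sub (hφ.mul_const c) (hint t), integral_mul_const, hf t ht]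
    have : c * (1 - Λ) = μ := div_mul_cancel₀ μ (by linarith)
    linarith
  simpa using hgap.const_sub c

end Renewal

theorem tendsto_div_atTop_of_tendsto_deriv {f f' : ℝ → ℝ} {c : ℝ}
    (hf : ∀ᶠ t in atTop, HasDerivAt f (f' t) t) (hf' : Tendsto f' atTop (𝓝 c)) :
    Tendsto (fun t => f t / t) atTop (𝓝 c) := by
  set h := fun t => f t - c * t
  have hlo : h =o[atTop] id := by
    refine Asymptotics.isLittleO_iff.2 fun ε hε => ?_
    obtain ⟨T, hT⟩ := eventually_atTop.1 <| (eventually_ge_atTop 0).and <|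
      hf.and (hf'.eventually (Metric.closedBall_mem_nhds c (half_pos hε)))
    have hmv : ∀ t ≥ T, ‖h t - h T‖ ≤ ε / 2 * ‖t - T‖ := fun t ht =>
      Convex.norm_image_sub_le_of_norm_hasDerivWithin_le (f' := fun x => f' x - c)
        (fun x hx => by
          have := ((hT x hx).2.1.sub ((hasDerivAt_id' x).const_mul c)).hasDerivWithinAt
            (s := Ici T)
          rwa [mul_one] at this)
        (fun x hx => (hT x hx).2.2) (convex_Ici T) self_mem_Ici ht
    filter_upwards [eventually_ge_atTop T, eventually_ge_atTop (2 * ‖h T‖ / ε)] with t htT ht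
    have hT0 := (hT T le_rfl).1
    rw [div_le_iff₀ hε] at ht
    have := hmv t htT
    rw [Real.norm_of_nonneg (sub_nonneg.2 htT)] at this
    rw [id, Real.norm_of_nonneg (hT0.trans htT)]
    nlinarith [norm_sub_norm_le (h t) (h T)]
  have hdiv := hlo.tendsto_div_nhds_zero.add_const c
  rw [zero_add] at hdiv
  refine hdiv.congr' ?_
  filter_upwards [eventually_gt_atTop 0] with t ht
  simp only [h, id, sub_div, mul_div_assoc, div_self ht.ne', mul_one, sub_add_cancel]

theorem stmt5_general (μ : ℝ) (hμ : 0 < μ) (φ : ℝ → ℝ)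
    (hφ0 : ∀ t : ℝ, 0 ≤ t → 0 ≤ φ t)
    (hφint : IntegrableOn φ (Ioi 0))
    (hΛ : (∫ s in Ioi (0:ℝ), φ s) < 1)
    (m m' : ℝ → ℝ)
    (hmono : MonotoneOn m (Ici 0))
    (heq : ∀ t : ℝ, 0 ≤ t → m t = μ * t + ∫ s in (0:ℝ)..t, φ (t - s) * m s)
    (hderiv : ∀ t ∈ Ici (0:ℝ), HasDerivWithinAt m (m' t) (Ici 0) t)
    (hderiv_cont : ContinuousOn m' (Ici 0)) :
    Tendsto m' atTop (𝓝 (μ / (1 - ∫ s in Ioi (0:ℝ), φ s))) ∧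
    Tendsto (fun t => m t / t) atTop (𝓝 (μ / (1 - ∫ s in Ioi (0:ℝ), φ s))) := by
  have hm'0 : ∀ t ∈ Ici (0:ℝ), 0 ≤ m' t := fun t ht =>
    (hderiv t ht).derivWithin (uniqueDiffOn_Ici 0 t ht) ▸ hmono.derivWithin_nonneg
  have hf : Tendsto ((Ici 0).indicator m') atTop (𝓝 (μ / (1 - ∫ s in Ioi (0:ℝ), φ s))) :=
    tendsto_of_eq_add_integral_mul_comp_sub hμ.le hφ0 hφint hΛ
      (measurable_indicator_Ici_of_continuousOn hderiv_cont) (indicator_nonneg hm'0)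
      (fun y hy => indicator_of_notMem (not_le.2 hy) m')
      (bddAbove_indicator_Ici_image_Iic hderiv_cont) fun t ht => by
        rw [indicator_of_mem (mem_Ici.2 ht)]
        exact eq_add_integral_mul_indicator_comp_sub hφint heq hderiv hderiv_cont ht
  have hm' : Tendsto m' atTop (𝓝 (μ / (1 - ∫ s in Ioi (0:ℝ), φ s))) :=
    hf.congr' ((eventually_ge_atTop 0).mono fun t ht => indicator_of_mem (mem_Ici.2 ht) m')
  refine ⟨hm', tendsto_div_atTop_of_tendsto_deriv ?_ hm'⟩
  filter_upwards [eventually_gt_atTop 0] with t ht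
  exact (hderiv t ht.le).hasDerivAt (Ici_mem_nhds ht)

/-- **subcritical case.** Let `μ > 0` and `φ : [0,∞) → [0,∞)` be measurable with
`Λ = ∫₀^∞ φ < 1`.  Let `m` be the unique nondecreasing locally bounded solution of
`m t = μ t + ∫₀ᵗ φ(t-s) m s ds` (which is `C¹` on `[0,∞)`, with derivative `m'`).  Then
`m' t → μ/(1-Λ)` and `m t / t → μ/(1-Λ)` as `t → ∞`. -/
theorem stmt5 (μ : ℝ) (hμ : 0 < μ) (φ : ℝ → ℝ)
    (hφmeas : Measurable φ)
    (hφ0 : ∀ t : ℝ, 0 ≤ t → 0 ≤ φ t)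
    (hφint : IntegrableOn φ (Ioi 0))
    (hΛ : (∫ s in Ioi (0:ℝ), φ s) < 1)
    (m m' : ℝ → ℝ)
    (hmono : MonotoneOn m (Ici 0))
    (hlb : ∀ T : ℝ, 0 ≤ T → ∃ M : ℝ, ∀ t ∈ Icc (0:ℝ) T, m t ≤ M)
    (heq : ∀ t : ℝ, 0 ≤ t → m t = μ * t + ∫ s in (0:ℝ)..t, φ (t - s) * m s)
    (hderiv : ∀ t ∈ Ici (0:ℝ), HasDerivWithinAt m (m' t) (Ici 0) t)
    (hderiv_cont : ContinuousOn m' (Ici 0)) :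
    Tendsto m' atTop (𝓝 (μ / (1 - ∫ s in Ioi (0:ℝ), φ s))) ∧
    Tendsto (fun t => m t / t) atTop (𝓝 (μ / (1 - ∫ s in Ioi (0:ℝ), φ s))) :=
  stmt5_general μ hμ φ hφ0 hφint hΛ m m' hmono heq hderiv hderiv_cont
end

section
/- Assume φ:[0,∞)→[0,∞) is measurable with Λ = ∫₀^∞ φ(s) ds ∈ (1,∞], φ has locally finite variation and its total variation on [0,t] is at most C(1+t)^p for some constants C,p>0 and all t≥0; let α₀ be the unique positive real with ∫₀^∞ e^{−α₀ t} φ(t) dt = 1. If (η_n)_{n≥1} is a real sequence with lim_{n→∞} η_n = 0, then lim_{t→∞} e^{−α₀ t} ∑_{n≥1} η_n ∫₀ᵗ φ^{⋆n}(t−s) e^{α₀ s/2} ds = 0. -/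
/-!
Tilting by `e^{-α₀ t}` turns `φ` into a probability density `ψ` on `(0, ∞)`, and the `n`-th term
into `η_n m_n(t)` with `m_n(t) = ∫₀ᵗ ψ^{⋆n}(u) e^{-α₀ (t - u) / 2} du`. Each `m_n(t)` tends to `0`
by dominated convergence. The sum `∑ₙ m_n(t)` is bounded uniformly in `t`: splitting the random walk
with step density `ψ` at its first passage above `a`, the renewal density `∑ₙ ψ^{⋆n}` has mass at
most `(1 - q)⁻¹` on every window `(a, a + δ]`, where `q < 1` is the mass of `ψ` on `(0, δ]`, while
the weight `e^{-α₀ (t - u) / 2}` decays geometrically over the windows `(t - (k + 1) δ, t - k δ]`.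
Since `η_n → 0`, the weighted sum then tends to `0`.
-/

open MeasureTheory Set Filter Topology intervalIntegral
open scoped ENNReal
open Finset.HasAntidiagonal (antidiagonal)

/-- Convolution powers: `convPow φ n = φ^{⋆(n+1)}`, where `φ^{⋆1} = φ` and
`φ^{⋆(n+1)} = φ^{⋆n} ⋆ φ` with `(f ⋆ g) t = ∫₀ᵗ f s * g (t - s) ds`. -/
noncomputable def convPow (φ : ℝ → ℝ) : ℕ → ℝ → ℝ
  | 0 => φ
  | n + 1 => fun t => ∫ s in (0:ℝ)..t, convPow φ n s * φ (t - s)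

section LConvolution

variable {f g ψ : ℝ → ℝ≥0∞}

lemma lconvolution_apply_eq_lintegral_sub (f g : ℝ → ℝ≥0∞) (x : ℝ) :
    (f ⋆ₗ g) x = ∫⁻ y, f y * g (x - y) := by
  simp only [lconvolution_def, neg_add_eq_sub]

lemma lintegral_lconvolution (hf : Measurable f) (hg : Measurable g) :
    ∫⁻ x, (f ⋆ₗ g) x = (∫⁻ x, f x) * ∫⁻ x, g x := by
  simp only [lconvolution_def]
  rw [lintegral_lintegral_swap (by fun_prop), ← lintegral_mul_const _ hf]
  refine lintegral_congr fun y => ?_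
  rw [lintegral_const_mul _ (by fun_prop), lintegral_add_left_eq_self g (-y), mul_comm]

lemma lconvolution_eq_zero_of_le {a : ℝ} (hf : ∀ x ≤ a, f x = 0) (hg : ∀ x ≤ 0, g x = 0)
    {x : ℝ} (hx : x ≤ a) : (f ⋆ₗ g) x = 0 := by
  have h : ∀ y, f y * g (x - y) = 0 := fun y => by
    rcases le_or_gt y a with hy | hy
    · rw [hf y hy, zero_mul]
    · rw [hg (x - y) (by linarith), mul_zero]
  simp only [lconvolution_apply_eq_lintegral_sub, h, lintegral_zero]

lemma add_lconvolution (hf : Measurable f) (hψ : Measurable ψ) :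
    (f + g) ⋆ₗ ψ = f ⋆ₗ ψ + g ⋆ₗ ψ := by
  ext x
  simp only [lconvolution_def, Pi.add_apply, add_mul]
  exact lintegral_add_left (by fun_prop) _

lemma finsetSum_lconvolution {ι : Type*} (s : Finset ι) {F : ι → ℝ → ℝ≥0∞}
    (hF : ∀ i ∈ s, Measurable (F i)) (hψ : Measurable ψ) :
    (∑ i ∈ s, F i) ⋆ₗ ψ = ∑ i ∈ s, F i ⋆ₗ ψ := by
  ext x
  simp only [lconvolution_def, Finset.sum_apply, Finset.sum_mul]
  exact lintegral_finsetSum _ fun i hi => by have := hF i hi; fun_prop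

lemma setLIntegral_Ioc_lconvolution_le (hg : Measurable g) (hψ : Measurable ψ)
    (hψ0 : ∀ x ≤ 0, ψ x = 0) {a : ℝ} (hga : ∀ x ≤ a, g x = 0) (δ : ℝ) :
    ∫⁻ x in Ioc a (a + δ), (g ⋆ₗ ψ) x ≤ (∫⁻ x in Ioc a (a + δ), g x) * ∫⁻ y in Iic δ, ψ y := by
  set W := Ioc a (a + δ)
  have hslice : ∀ y, g y * ∫⁻ u in W, ψ (u - y) ≤ W.indicator g y * ∫⁻ v in Iic δ, ψ v := by
    intro y
    rcases le_or_gt y a with hya | hya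
    · simp [hga y hya]
    by_cases hyW : y ∈ W
    · rw [indicator_of_mem hyW]
      gcongr g y * ?_
      rw [← lintegral_indicator measurableSet_Ioc, ← lintegral_indicator measurableSet_Iic,
        ← lintegral_sub_right_eq_self ((Iic δ).indicator ψ) y]
      refine lintegral_mono fun u => ?_
      by_cases huW : u ∈ W
      · rw [indicator_of_mem huW, indicator_of_mem (by simp only [mem_Iic]; linarith [huW.2])]
      · rw [indicator_of_notMem huW]; exact zero_le
    · have hy : a + δ < y := by simpa [W, hya] using hyW
      rw [setLIntegral_congr_fun measurableSet_Ioc fun u hu => hψ0 _ (by linarith [hu.2])]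
      simp
  calc ∫⁻ x in W, (g ⋆ₗ ψ) x
      = ∫⁻ y, ∫⁻ u in W, g y * ψ (u - y) := by
        simp only [lconvolution_apply_eq_lintegral_sub]
        exact lintegral_lintegral_swap (by fun_prop)
    _ ≤ ∫⁻ y, W.indicator g y * ∫⁻ v in Iic δ, ψ v := by
        refine lintegral_mono fun y => ?_
        rw [lintegral_const_mul _ (by fun_prop)]
        exact hslice y
    _ = (∫⁻ x in W, g x) * ∫⁻ y in Iic δ, ψ y := by
        rw [lintegral_mul_const _ (hg.indicator measurableSet_Ioc),
          lintegral_indicator measurableSet_Ioc]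

end LConvolution

lemma ENNReal.tsum_mul_tsum_eq_tsum_sum_antidiagonal (f g : ℕ → ℝ≥0∞) :
    (∑' n, f n) * ∑' n, g n = ∑' n, ∑ p ∈ antidiagonal n, f p.1 * g p.2 := by
  simp_rw [← ENNReal.tsum_mul_right, ← ENNReal.tsum_mul_left]
  rw [← ENNReal.tsum_prod, ← Finset.HasAntidiagonal.sigmaAntidiagonalEquivProd.tsum_eq,
    ENNReal.tsum_sigma']
  refine tsum_congr fun n => ?_
  rw [tsum_fintype, ← Finset.sum_coe_sort (antidiagonal n) fun p => f p.1 * g p.2]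
  rfl

-- `lconvPow ψ n` has `n + 1` factors, as `convPow` does.
noncomputable def lconvPow (ψ : ℝ → ℝ≥0∞) : ℕ → ℝ → ℝ≥0∞
  | 0 => ψ
  | n + 1 => lconvPow ψ n ⋆ₗ ψ

/- If `ψ` is the density of the steps of a random walk `S` started at `0`, then `stayBelow ψ a n`
is the density of `S (n + 1)` on the event `S 1, …, S (n + 1) ≤ a`, `firstPassage ψ a j` that of
`S (j + 1)` on the event that `j + 1` is the first time `S` exceeds `a`, and
`afterPassage ψ a j k` that of `S (j + k + 1)` on that same event. -/
noncomputable def stayBelow (ψ : ℝ → ℝ≥0∞) (a : ℝ) : ℕ → ℝ → ℝ≥0∞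
  | 0 => (Iic a).indicator ψ
  | n + 1 => (Iic a).indicator (stayBelow ψ a n ⋆ₗ ψ)

noncomputable def firstPassage (ψ : ℝ → ℝ≥0∞) (a : ℝ) : ℕ → ℝ → ℝ≥0∞
  | 0 => (Ioi a).indicator ψ
  | n + 1 => (Ioi a).indicator (stayBelow ψ a n ⋆ₗ ψ)

noncomputable def afterPassage (ψ : ℝ → ℝ≥0∞) (a : ℝ) (j : ℕ) : ℕ → ℝ → ℝ≥0∞
  | 0 => firstPassage ψ a j
  | k + 1 => afterPassage ψ a j k ⋆ₗ ψ

section FirstPassage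

variable {ψ : ℝ → ℝ≥0∞}

lemma measurable_lconvPow (hψ : Measurable ψ) : ∀ n, Measurable (lconvPow ψ n)
  | 0 => hψ
  | n + 1 => measurable_lconvolution _ (measurable_lconvPow hψ n) hψ

lemma lconvPow_eq_zero_of_nonpos (hψ0 : ∀ x ≤ 0, ψ x = 0) : ∀ n, ∀ x ≤ 0, lconvPow ψ n x = 0
  | 0 => hψ0
  | n + 1 => fun _ => lconvolution_eq_zero_of_le (lconvPow_eq_zero_of_nonpos hψ0 n) hψ0

lemma lintegral_lconvPow (hψ : Measurable ψ) : ∀ n, ∫⁻ x, lconvPow ψ n x = (∫⁻ x, ψ x) ^ (n + 1)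
  | 0 => (pow_one _).symm
  | n + 1 => by
    rw [lconvPow, lintegral_lconvolution (measurable_lconvPow hψ n) hψ, lintegral_lconvPow hψ n,
      ← pow_succ]

variable (a : ℝ)

lemma measurable_stayBelow (hψ : Measurable ψ) : ∀ n, Measurable (stayBelow ψ a n)
  | 0 => hψ.indicator measurableSet_Iic
  | n + 1 =>
    (measurable_lconvolution _ (measurable_stayBelow hψ n) hψ).indicator measurableSet_Iic

lemma measurable_firstPassage (hψ : Measurable ψ) : ∀ n, Measurable (firstPassage ψ a n)
  | 0 => hψ.indicator measurableSet_Ioi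
  | n + 1 =>
    (measurable_lconvolution _ (measurable_stayBelow a hψ n) hψ).indicator measurableSet_Ioi

lemma measurable_afterPassage (hψ : Measurable ψ) (j : ℕ) :
    ∀ k, Measurable (afterPassage ψ a j k)
  | 0 => measurable_firstPassage a hψ j
  | k + 1 => measurable_lconvolution _ (measurable_afterPassage hψ j k) hψ

lemma afterPassage_eq_zero_of_le (hψ0 : ∀ x ≤ 0, ψ x = 0) (j : ℕ) :
    ∀ k, ∀ x ≤ a, afterPassage ψ a j k x = 0
  | 0 => fun x hx => by
    cases j <;> exact indicator_of_notMem (not_lt.2 hx) _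
  | k + 1 => fun _ => lconvolution_eq_zero_of_le (afterPassage_eq_zero_of_le hψ0 j k) hψ0

lemma stayBelow_lconvolution (n : ℕ) :
    stayBelow ψ a n ⋆ₗ ψ = stayBelow ψ a (n + 1) + firstPassage ψ a (n + 1) := by
  rw [stayBelow, firstPassage, ← compl_Iic, indicator_self_add_compl]

lemma lconvPow_eq_stayBelow_add_sum_afterPassage (hψ : Measurable ψ) : ∀ n,
    lconvPow ψ n = stayBelow ψ a n + ∑ p ∈ antidiagonal n, afterPassage ψ a p.1 p.2
  | 0 => by
    simp [lconvPow, stayBelow, afterPassage, firstPassage, ← compl_Iic, indicator_self_add_compl]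
  | n + 1 => by
    rw [lconvPow, lconvPow_eq_stayBelow_add_sum_afterPassage hψ n,
      add_lconvolution (measurable_stayBelow a hψ n) hψ,
      finsetSum_lconvolution _ (fun p _ => measurable_afterPassage a hψ p.1 p.2) hψ,
      stayBelow_lconvolution, Finset.Nat.sum_antidiagonal_succ', add_assoc]
    rfl

lemma lintegral_stayBelow_add_sum_firstPassage (hψ : Measurable ψ) (hmass : ∫⁻ x, ψ x = 1) :
    ∀ n, (∫⁻ x, stayBelow ψ a n x) + ∑ j ∈ Finset.range (n + 1), ∫⁻ x, firstPassage ψ a j x = 1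
  | 0 => by
    rw [Finset.sum_range_one, ← lintegral_add_left (measurable_stayBelow a hψ 0)
      (firstPassage ψ a 0), ← hmass]
    simp only [stayBelow, firstPassage, ← compl_Iic]
    exact lintegral_congr fun x => congrFun (indicator_self_add_compl _ ψ) x
  | n + 1 => by
    have hstep : (∫⁻ x, stayBelow ψ a (n + 1) x) + ∫⁻ x, firstPassage ψ a (n + 1) x
        = ∫⁻ x, stayBelow ψ a n x := by
      rw [← lintegral_add_left (measurable_stayBelow a hψ _) (firstPassage ψ a (n + 1)),
        ← mul_one (∫⁻ x, stayBelow ψ a n x), ← hmass,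
        ← lintegral_lconvolution (measurable_stayBelow a hψ n) hψ, stayBelow_lconvolution]
      rfl
    calc _ = ((∫⁻ x, stayBelow ψ a (n + 1) x) + ∫⁻ x, firstPassage ψ a (n + 1) x)
          + ∑ j ∈ Finset.range (n + 1), ∫⁻ x, firstPassage ψ a j x := by
          rw [Finset.sum_range_succ]; ring
      _ = 1 := by rw [hstep, lintegral_stayBelow_add_sum_firstPassage hψ hmass n]

lemma tsum_lintegral_firstPassage_le (hψ : Measurable ψ) (hmass : ∫⁻ x, ψ x = 1) :
    ∑' j, ∫⁻ x, firstPassage ψ a j x ≤ 1 :=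
  ENNReal.tsum_le_of_sum_range_le fun n => by
    cases n with
    | zero => simp
    | succ n => exact (le_add_self).trans_eq (lintegral_stayBelow_add_sum_firstPassage a hψ hmass n)

end FirstPassage

section Renewal

variable {ψ : ℝ → ℝ≥0∞} (hψ : Measurable ψ) (hψ0 : ∀ x ≤ 0, ψ x = 0)
include hψ hψ0

lemma setLIntegral_Ioc_afterPassage_le (a δ : ℝ) (j : ℕ) :
    ∀ k, ∫⁻ x in Ioc a (a + δ), afterPassage ψ a j k x
      ≤ (∫⁻ x, firstPassage ψ a j x) * (∫⁻ x in Iic δ, ψ x) ^ k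
  | 0 => by simpa [afterPassage] using setLIntegral_le_lintegral _ _
  | k + 1 => by
    calc ∫⁻ x in Ioc a (a + δ), afterPassage ψ a j (k + 1) x
        ≤ (∫⁻ x in Ioc a (a + δ), afterPassage ψ a j k x) * ∫⁻ x in Iic δ, ψ x :=
          setLIntegral_Ioc_lconvolution_le (measurable_afterPassage a hψ j k) hψ hψ0
            (afterPassage_eq_zero_of_le a hψ0 j k) δ
      _ ≤ (∫⁻ x, firstPassage ψ a j x) * (∫⁻ x in Iic δ, ψ x) ^ k * ∫⁻ x in Iic δ, ψ x := by
          gcongr; exact setLIntegral_Ioc_afterPassage_le a δ j k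
      _ = _ := by ring

theorem tsum_setLIntegral_Ioc_lconvPow_le (hmass : ∫⁻ x, ψ x = 1) (a δ : ℝ) :
    ∑' n, ∫⁻ x in Ioc a (a + δ), lconvPow ψ n x ≤ (1 - ∫⁻ x in Iic δ, ψ x)⁻¹ := by
  set q := ∫⁻ x in Iic δ, ψ x
  set B := fun j => ∫⁻ x, firstPassage ψ a j x
  have hterm : ∀ n, ∫⁻ x in Ioc a (a + δ), lconvPow ψ n x
      ≤ ∑ p ∈ antidiagonal n, B p.1 * q ^ p.2 := fun n => by
    have hstay : ∀ x ∈ Ioc a (a + δ), stayBelow ψ a n x = 0 := fun x hx => by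
      cases n <;> exact indicator_of_notMem (notMem_Iic.2 hx.1) _
    rw [lconvPow_eq_stayBelow_add_sum_afterPassage a hψ n, Pi.add_def,
      lintegral_add_left (measurable_stayBelow a hψ n),
      setLIntegral_congr_fun measurableSet_Ioc hstay,
      lintegral_zero, zero_add]
    simp only [Finset.sum_apply]
    rw [lintegral_finsetSum _ fun p _ => measurable_afterPassage a hψ p.1 p.2]
    exact Finset.sum_le_sum fun p _ => setLIntegral_Ioc_afterPassage_le hψ hψ0 a δ p.1 p.2
  calc ∑' n, ∫⁻ x in Ioc a (a + δ), lconvPow ψ n x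
      ≤ ∑' n, ∑ p ∈ antidiagonal n, B p.1 * q ^ p.2 := ENNReal.tsum_le_tsum hterm
    _ = (∑' j, B j) * ∑' k, q ^ k := (ENNReal.tsum_mul_tsum_eq_tsum_sum_antidiagonal _ _).symm
    _ ≤ 1 * (1 - q)⁻¹ := by
        rw [ENNReal.tsum_geometric]
        gcongr
        exact tsum_lintegral_firstPassage_le a hψ hmass
    _ = (1 - q)⁻¹ := one_mul _

end Renewal

section Damping

variable {f : ℝ → ℝ≥0∞} {β : ℝ}

lemma setLIntegral_Iic_eq_setLIntegral_Ioc (hf0 : ∀ x ≤ 0, f x = 0) {t : ℝ} (ht : 0 ≤ t) :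
    ∫⁻ x in Iic t, f x = ∫⁻ x in Ioc 0 t, f x := by
  rw [← Iic_union_Ioc_eq_Iic ht, lintegral_union measurableSet_Ioc (Iic_disjoint_Ioc le_rfl),
    setLIntegral_congr_fun measurableSet_Iic hf0, lintegral_zero, zero_add]

lemma tendsto_setLIntegral_Iic_nhdsGT_zero (hf0 : ∀ x ≤ 0, f x = 0) (hfin : ∫⁻ x, f x ≠ ∞) :
    Tendsto (fun δ => ∫⁻ x in Iic δ, f x) (𝓝[>] 0) (𝓝 0) := by
  have hIoc : Tendsto (fun δ => volume (Ioc (0 : ℝ) δ)) (𝓝[>] 0) (𝓝 0) := by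
    simp only [Real.volume_Ioc, sub_zero]
    simpa using (ENNReal.tendsto_ofReal (tendsto_id (x := 𝓝 (0 : ℝ)))).mono_left nhdsWithin_le_nhds
  refine (tendsto_setLIntegral_zero hfin hIoc).congr' ?_
  filter_upwards [self_mem_nhdsWithin] with δ hδ
  exact (setLIntegral_Iic_eq_setLIntegral_Ioc hf0 (le_of_lt hδ)).symm

lemma setLIntegral_Iic_mul_exp_le (hf : Measurable f) (hβ : 0 ≤ β) {δ : ℝ} (hδ : 0 < δ)
    {K : ℝ≥0∞} (hK : ∀ a, ∫⁻ x in Ioc a (a + δ), f x ≤ K) (t : ℝ) :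
    ∫⁻ u in Iic t, f u * ENNReal.ofReal (Real.exp (-(β * (t - u))))
      ≤ K * (1 - ENNReal.ofReal (Real.exp (-(β * δ))))⁻¹ := by
  set c := ENNReal.ofReal (Real.exp (-(β * δ)))
  set W : ℕ → Set ℝ := fun k => Ioc (t - (k + 1) * δ) (t - (k + 1) * δ + δ)
  have hcover : ∀ u, (Iic t).indicator (fun u => f u * ENNReal.ofReal (Real.exp (-(β * (t - u))))) u
      ≤ ∑' k, (W k).indicator (fun u => c ^ k * f u) u := by
    intro u
    by_cases hu : u ∈ Iic t
    swap
    · rw [indicator_of_notMem hu]; exact zero_le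
    set k := ⌊(t - u) / δ⌋₊
    have hk : k * δ ≤ t - u :=
      (le_div_iff₀ hδ).1 (Nat.floor_le (div_nonneg (by simpa using hu) hδ.le))
    have hk' : t - u < (k + 1) * δ := (div_lt_iff₀ hδ).1 (Nat.lt_floor_add_one _)
    refine le_trans ?_ (ENNReal.le_tsum k)
    rw [indicator_of_mem hu, indicator_of_mem (show u ∈ W k from ⟨by linarith, by linarith⟩),
      mul_comm]
    gcongr
    rw [← ENNReal.ofReal_pow (Real.exp_pos _).le, ← Real.exp_nat_mul]
    gcongr
    nlinarith
  calc ∫⁻ u in Iic t, f u * ENNReal.ofReal (Real.exp (-(β * (t - u))))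
      ≤ ∫⁻ u, ∑' k, (W k).indicator (fun u => c ^ k * f u) u := by
        rw [← lintegral_indicator measurableSet_Iic]; exact lintegral_mono hcover
    _ = ∑' k, c ^ k * ∫⁻ u in W k, f u := by
        rw [lintegral_tsum fun k => ((hf.const_mul _).indicator measurableSet_Ioc).aemeasurable]
        refine tsum_congr fun k => ?_
        rw [lintegral_indicator measurableSet_Ioc, lintegral_const_mul _ hf]
    _ ≤ ∑' k, c ^ k * K := by gcongr with k; exact hK _
    _ = K * (1 - c)⁻¹ := by rw [ENNReal.tsum_mul_right, ENNReal.tsum_geometric, mul_comm]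

lemma tendsto_setLIntegral_Iic_mul_exp_atTop (hf : Measurable f) (hfin : ∫⁻ x, f x ≠ ∞)
    (hβ : 0 < β) :
    Tendsto (fun t => ∫⁻ u in Iic t, f u * ENNReal.ofReal (Real.exp (-(β * (t - u))))) atTop
      (𝓝 0) := by
  simp_rw [← lintegral_indicator measurableSet_Iic]
  have hlim : ∀ᵐ u, Tendsto (fun t => (Iic t).indicator
      (fun u => f u * ENNReal.ofReal (Real.exp (-(β * (t - u))))) u) atTop (𝓝 0) := by
    filter_upwards [ae_lt_top hf hfin] with u hu
    have hexp : Tendsto (fun t => Real.exp (-(β * (t - u)))) atTop (𝓝 0) :=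
      Real.tendsto_exp_atBot.comp <| tendsto_neg_atTop_atBot.comp <|
        (tendsto_atTop_add_const_right _ _ tendsto_id).const_mul_atTop hβ
    have := ENNReal.Tendsto.const_mul (ENNReal.tendsto_ofReal hexp) (Or.inr hu.ne)
    rw [ENNReal.ofReal_zero, mul_zero] at this
    refine this.congr' ?_
    filter_upwards [eventually_ge_atTop u] with t ht
    rw [indicator_of_mem (mem_Iic.2 ht)]
  simpa using tendsto_lintegral_filter_of_dominated_convergence f
    (Eventually.of_forall fun t => (hf.mul (by fun_prop)).indicator measurableSet_Iic)
    (Eventually.of_forall fun t => ae_of_all _ fun u => by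
      by_cases hu : u ∈ Iic t
      · rw [indicator_of_mem hu]
        refine mul_le_of_le_one_right' (ENNReal.ofReal_le_one.2 (Real.exp_le_one_iff.2 ?_))
        nlinarith [mem_Iic.1 hu]
      · rw [indicator_of_notMem hu]; exact zero_le)
    hfin hlim

end Damping

theorem exists_tsum_setLIntegral_Iic_lconvPow_mul_exp_le {ψ : ℝ → ℝ≥0∞} {β : ℝ} (hψ : Measurable ψ)
    (hψ0 : ∀ x ≤ 0, ψ x = 0) (hmass : ∫⁻ x, ψ x = 1) (hβ : 0 < β) :
    ∃ M ≠ ∞, ∀ t, ∑' n, ∫⁻ u in Iic t, lconvPow ψ n u * ENNReal.ofReal (Real.exp (-(β * (t - u))))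
      ≤ M := by
  obtain ⟨δ, hq, hδ⟩ := (((tendsto_setLIntegral_Iic_nhdsGT_zero hψ0 (by simp [hmass])).eventually
    (gt_mem_nhds one_pos)).and self_mem_nhdsWithin).exists
  have hc : ENNReal.ofReal (Real.exp (-(β * δ))) < 1 := by
    rw [ENNReal.ofReal_lt_one, Real.exp_lt_one_iff, neg_lt_zero]
    exact mul_pos hβ hδ
  refine ⟨(1 - ∫⁻ x in Iic δ, ψ x)⁻¹ * (1 - ENNReal.ofReal (Real.exp (-(β * δ))))⁻¹,
    ENNReal.mul_ne_top (ENNReal.inv_ne_top.2 (tsub_pos_of_lt hq).ne')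
      (ENNReal.inv_ne_top.2 (tsub_pos_of_lt hc).ne'), fun t => ?_⟩
  have hU : Measurable fun x => ∑' n, lconvPow ψ n x :=
    Measurable.tsum (measurable_lconvPow hψ)
  calc ∑' n, ∫⁻ u in Iic t, lconvPow ψ n u * ENNReal.ofReal (Real.exp (-(β * (t - u))))
      = ∫⁻ u in Iic t, (∑' n, lconvPow ψ n u) * ENNReal.ofReal (Real.exp (-(β * (t - u)))) := by
        simp_rw [← ENNReal.tsum_mul_right]
        exact (lintegral_tsum fun n => by have := measurable_lconvPow hψ n; fun_prop).symm
    _ ≤ _ := setLIntegral_Iic_mul_exp_le hU hβ.le hδ (fun a => by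
        rw [lintegral_tsum fun n => (measurable_lconvPow hψ n).aemeasurable]
        exact tsum_setLIntegral_Ioc_lconvPow_le hψ hψ0 hmass a δ) t

lemma tsum_nat_add_mul_le {a x : ℕ → ℝ} {ε S : ℝ} {N : ℕ} (hx0 : ∀ n, 0 ≤ x n)
    (hx : Summable x) (hS : ∑' n, x n ≤ S) (hax : Summable fun n => a n * x n) (hε : 0 ≤ ε)
    (haN : ∀ n ≥ N, a n ≤ ε) :
    ∑' k, a (k + N) * x (k + N) ≤ ε * S := by
  calc ∑' k, a (k + N) * x (k + N)
      ≤ ∑' k, ε * x (k + N) :=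
        ((summable_nat_add_iff N).2 hax).tsum_le_tsum
          (fun k => mul_le_mul_of_nonneg_right (haN _ (Nat.le_add_left N k)) (hx0 _))
          (((summable_nat_add_iff N).2 hx).mul_left ε)
    _ ≤ ε * S := by
      rw [tsum_mul_left]
      gcongr
      refine le_trans ?_ hS
      rw [← hx.sum_add_tsum_nat_add N]
      exact le_add_of_nonneg_left (Finset.sum_nonneg fun n _ => hx0 n)

lemma tendsto_tsum_mul_toReal {ι : Type*} {l : Filter ι} {η : ℕ → ℝ}
    (hη : Tendsto η atTop (𝓝 0)) {m : ℕ → ι → ℝ≥0∞} {M : ℝ≥0∞} (hM : M ≠ ∞)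
    (hbound : ∀ i, ∑' n, m n i ≤ M) (hm : ∀ n, Tendsto (m n) l (𝓝 0)) :
    Tendsto (fun i => ∑' n, η n * (m n i).toReal) l (𝓝 0) := by
  have hfin : ∀ n i, m n i ≠ ∞ := fun n i =>
    ne_top_of_le_ne_top hM ((ENNReal.le_tsum n).trans (hbound i))
  have hsum : ∀ i, Summable fun n => (m n i).toReal := fun i =>
    ENNReal.summable_toReal (ne_top_of_le_ne_top hM (hbound i))
  have htsum : ∀ i, ∑' n, (m n i).toReal ≤ M.toReal := fun i => by
    rw [← ENNReal.tsum_toReal_eq (hfin · i)]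
    exact ENNReal.toReal_mono hM (hbound i)
  obtain ⟨C, hC⟩ : ∃ C, ∀ n, ‖η n‖ ≤ C := by
    obtain ⟨C, hC⟩ := hη.norm.bddAbove_range
    exact ⟨C, fun n => hC ⟨n, rfl⟩⟩
  have habs : ∀ i, Summable fun n => ‖η n‖ * (m n i).toReal := fun i =>
    Summable.of_nonneg_of_le (fun n => by positivity)
      (fun n => mul_le_mul_of_nonneg_right (hC n) ENNReal.toReal_nonneg) ((hsum i).mul_left C)
  rw [Metric.tendsto_nhds]
  intro ε hε
  set ε' := ε / (2 * (M.toReal + 1))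
  have hε' : 0 < ε' := by positivity
  obtain ⟨N, hN⟩ := eventually_atTop.1 (hη.norm.eventually (ge_mem_nhds (by simpa using hε')))
  have hhead : Tendsto (fun i => ∑ n ∈ Finset.range N, ‖η n‖ * (m n i).toReal) l (𝓝 0) := by
    simpa using tendsto_finsetSum _ fun n _ =>
      ((ENNReal.tendsto_toReal ENNReal.zero_ne_top).comp (hm n)).const_mul ‖η n‖
  filter_upwards [hhead.eventually (gt_mem_nhds (half_pos hε))] with i hi
  have htail := tsum_nat_add_mul_le (fun n => ENNReal.toReal_nonneg) (hsum i) (htsum i) (habs i)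
    hε'.le hN
  have hεM : ε' * M.toReal < ε / 2 := by
    have : 0 ≤ M.toReal := ENNReal.toReal_nonneg
    rw [div_mul_eq_mul_div, div_lt_div_iff₀ (by positivity) two_pos]
    nlinarith
  have hnorm : ∀ n, ‖η n * (m n i).toReal‖ = ‖η n‖ * (m n i).toReal := fun n => by
    rw [norm_mul, Real.norm_of_nonneg ENNReal.toReal_nonneg]
  rw [dist_zero_right]
  calc ‖∑' n, η n * (m n i).toReal‖ ≤ ∑' n, ‖η n‖ * (m n i).toReal :=
        (norm_tsum_le_tsum_norm ((habs i).congr fun n => (hnorm n).symm)).trans_eq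
          (tsum_congr hnorm)
    _ = ∑ n ∈ Finset.range N, ‖η n‖ * (m n i).toReal
          + ∑' k, ‖η (k + N)‖ * (m (k + N) i).toReal := ((habs i).sum_add_tsum_nat_add N).symm
    _ < ε := by linarith

lemma convPow_exp_mul (φ : ℝ → ℝ) (α : ℝ) :
    ∀ n t, convPow (fun x => Real.exp (-(α * x)) * φ x) n t = Real.exp (-(α * t)) * convPow φ n t
  | 0, _ => rfl
  | n + 1, t => by
    simp only [convPow, ← intervalIntegral.integral_const_mul]
    refine intervalIntegral.integral_congr fun s _ => ?_
    rw [convPow_exp_mul φ α n s]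
    calc Real.exp (-(α * s)) * convPow φ n s * (Real.exp (-(α * (t - s))) * φ (t - s))
        = (Real.exp (-(α * s)) * Real.exp (-(α * (t - s)))) * (convPow φ n s * φ (t - s)) := by
          ring
      _ = _ := by rw [← Real.exp_add]; ring_nf

lemma exp_neg_mul_intervalIntegral_convPow (φ : ℝ → ℝ) (α : ℝ) (n : ℕ) (t : ℝ) :
    Real.exp (-(α * t)) * ∫ s in (0 : ℝ)..t, convPow φ n (t - s) * Real.exp (α * s / 2)
      = ∫ s in (0 : ℝ)..t,
          convPow (fun x => Real.exp (-(α * x)) * φ x) n (t - s) * Real.exp (-(α / 2 * s)) := by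
  rw [← intervalIntegral.integral_const_mul]
  refine intervalIntegral.integral_congr fun s _ => ?_
  have hexp : Real.exp (-(α * t)) * Real.exp (α * s / 2)
      = Real.exp (-(α * (t - s))) * Real.exp (-(α / 2 * s)) := by
    rw [← Real.exp_add, ← Real.exp_add]; ring_nf
  rw [convPow_exp_mul]
  linear_combination convPow φ n (t - s) * hexp

lemma aestronglyMeasurable_of_ae_eq_ofReal {α : Type*} [MeasurableSpace α] {μ : Measure α}
    {F : α → ℝ≥0∞} {h : α → ℝ} {s : Set α} (hF : Measurable F) (hs : MeasurableSet s)
    (hh0 : ∀ x ∈ s, 0 ≤ h x) (heq : ∀ᵐ x ∂μ, x ∈ s → F x = ENNReal.ofReal (h x)) :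
    AEStronglyMeasurable h (μ.restrict s) := by
  refine hF.ennreal_toReal.aestronglyMeasurable.congr ?_
  rw [EventuallyEq, ae_restrict_iff' hs]
  filter_upwards [heq] with x hx hxs
  rw [hx hxs, ENNReal.toReal_ofReal (hh0 x hxs)]

noncomputable def positiveDensity (g : ℝ → ℝ) : ℝ → ℝ≥0∞ :=
  (Ioi 0).indicator fun x => ENNReal.ofReal (g x)

section PositiveDensity

variable {g : ℝ → ℝ}

lemma measurable_positiveDensity (hg : Measurable g) : Measurable (positiveDensity g) :=
  (ENNReal.measurable_ofReal.comp hg).indicator measurableSet_Ioi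

lemma positiveDensity_eq_zero_of_nonpos : ∀ x ≤ 0, positiveDensity g x = 0 :=
  fun _ hx => indicator_of_notMem (notMem_Ioi.2 hx) _

lemma lconvolution_positiveDensity {F : ℝ → ℝ≥0∞} {h : ℝ → ℝ} (hF0 : ∀ y ≤ 0, F y = 0)
    (hh0 : ∀ y, 0 ≤ y → 0 ≤ h y) (hFh : ∀ᵐ y, 0 < y → F y = ENNReal.ofReal (h y)) (x : ℝ) :
    (F ⋆ₗ positiveDensity g) x = ∫⁻ y in Ioo 0 x, ENNReal.ofReal (h y * g (x - y)) := by
  rw [lconvolution_apply_eq_lintegral_sub, ← lintegral_indicator measurableSet_Ioo]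
  refine lintegral_congr_ae ?_
  filter_upwards [hFh] with y hy
  rcases le_or_gt y 0 with hy0 | hy0
  · rw [hF0 y hy0, zero_mul, indicator_of_notMem fun h => hy0.not_gt h.1]
  rcases lt_or_ge y x with hyx | hyx
  · rw [indicator_of_mem (show y ∈ Ioo 0 x from ⟨hy0, hyx⟩), hy hy0,
      ENNReal.ofReal_mul (hh0 y hy0.le)]
    exact congrArg _ (indicator_of_mem (sub_pos.2 hyx) _)
  · rw [positiveDensity_eq_zero_of_nonpos _ (sub_nonpos.2 hyx), mul_zero,
      indicator_of_notMem fun h => hyx.not_gt h.2]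

lemma convPow_nonneg (hg0 : ∀ x, 0 ≤ x → 0 ≤ g x) : ∀ n x, 0 ≤ x → 0 ≤ convPow g n x
  | 0 => hg0
  | n + 1 => fun _ hx => intervalIntegral.integral_nonneg hx fun y hy =>
    mul_nonneg (convPow_nonneg hg0 n y hy.1) (hg0 _ (sub_nonneg.2 hy.2))

-- Only almost everywhere: where `lconvPow` is infinite, the Bochner integral defining `convPow`
-- takes its junk value `0`.
lemma lconvPow_positiveDensity_ae_eq (hg : Measurable g) (hg0 : ∀ x, 0 ≤ x → 0 ≤ g x)
    (hfin : ∫⁻ x, positiveDensity g x ≠ ∞) :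
    ∀ n, ∀ᵐ x, 0 < x → lconvPow (positiveDensity g) n x = ENNReal.ofReal (convPow g n x)
  | 0 => ae_of_all _ fun x (hx : x ∈ Ioi 0) => indicator_of_mem hx fun x => ENNReal.ofReal (g x)
  | n + 1 => by
    have ih := lconvPow_positiveDensity_ae_eq hg hg0 hfin n
    have hψ := measurable_positiveDensity hg
    have hmeas : AEStronglyMeasurable (convPow g n) (volume.restrict (Ioi 0)) :=
      aestronglyMeasurable_of_ae_eq_ofReal (measurable_lconvPow hψ n) measurableSet_Ioi
        (fun x hx => convPow_nonneg hg0 n x (le_of_lt hx)) ih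
    have hfin' : ∀ᵐ x, lconvPow (positiveDensity g) (n + 1) x ≠ ∞ := by
      refine (ae_lt_top (measurable_lconvPow hψ _) ?_).mono fun x hx => hx.ne
      rw [lintegral_lconvPow hψ]
      exact ENNReal.pow_ne_top hfin
    filter_upwards [hfin'] with x hx hx0
    have hlint := lconvolution_positiveDensity (g := g)
      (lconvPow_eq_zero_of_nonpos positiveDensity_eq_zero_of_nonpos n) (convPow_nonneg hg0 n) ih x
    have hint : convPow g (n + 1) x = ∫ y in Ioo 0 x, convPow g n y * g (x - y) := by
      show ∫ y in (0 : ℝ)..x, convPow g n y * g (x - y) = _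
      rw [intervalIntegral.integral_of_le hx0.le, integral_Ioc_eq_integral_Ioo]
    rw [lconvPow] at hx ⊢
    rw [hint, integral_eq_lintegral_of_nonneg_ae, ← hlint, ENNReal.ofReal_toReal hx]
    · exact (ae_restrict_iff' measurableSet_Ioo).2 (ae_of_all _ fun y hy =>
        mul_nonneg (convPow_nonneg hg0 n y hy.1.le) (hg0 _ (sub_nonneg.2 hy.2.le)))
    · exact (hmeas.mono_set Ioo_subset_Ioi_self).mul (hg.comp (by fun_prop)).aestronglyMeasurable

lemma intervalIntegral_convPow_mul_exp_eq (hg : Measurable g) (hg0 : ∀ x, 0 ≤ x → 0 ≤ g x)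
    (hfin : ∫⁻ x, positiveDensity g x ≠ ∞) (β : ℝ) (n : ℕ) {t : ℝ} (ht : 0 ≤ t) :
    ∫ s in (0 : ℝ)..t, convPow g n (t - s) * Real.exp (-(β * s))
      = (∫⁻ u in Iic t, lconvPow (positiveDensity g) n u
          * ENNReal.ofReal (Real.exp (-(β * (t - u))))).toReal := by
  have hdens := lconvPow_positiveDensity_ae_eq hg hg0 hfin n
  have hnn : ∀ u ∈ Ioc 0 t, 0 ≤ convPow g n u * Real.exp (-(β * (t - u))) := fun u hu =>
    mul_nonneg (convPow_nonneg hg0 n u hu.1.le) (Real.exp_pos _).le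
  have hmeas : AEStronglyMeasurable (convPow g n) (volume.restrict (Ioc 0 t)) :=
    (aestronglyMeasurable_of_ae_eq_ofReal (measurable_lconvPow (measurable_positiveDensity hg) n)
      measurableSet_Ioi (fun x hx => convPow_nonneg hg0 n x (le_of_lt hx)) hdens).mono_set
      Ioc_subset_Ioi_self
  calc ∫ s in (0 : ℝ)..t, convPow g n (t - s) * Real.exp (-(β * s))
      = ∫ u in Ioc 0 t, convPow g n u * Real.exp (-(β * (t - u))) := by
        rw [← intervalIntegral.integral_of_le ht]
        simpa using intervalIntegral.integral_comp_sub_left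
          (fun u => convPow g n u * Real.exp (-(β * (t - u)))) t (a := 0) (b := t)
    _ = (∫⁻ u in Ioc 0 t, ENNReal.ofReal (convPow g n u * Real.exp (-(β * (t - u))))).toReal :=
        integral_eq_lintegral_of_nonneg_ae
          ((ae_restrict_iff' measurableSet_Ioc).2 (ae_of_all _ hnn)) (hmeas.mul (by fun_prop))
    _ = _ := by
        rw [setLIntegral_Iic_eq_setLIntegral_Ioc (fun x hx => by
          rw [lconvPow_eq_zero_of_nonpos positiveDensity_eq_zero_of_nonpos n x hx, zero_mul]) ht]
        congr 1
        refine setLIntegral_congr_fun_ae measurableSet_Ioc ?_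
        filter_upwards [hdens] with u hu hu0
        rw [ENNReal.ofReal_mul (convPow_nonneg hg0 n u hu0.1.le), hu hu0.1]

end PositiveDensity

-- `η n` stands for `η_{n+1}`.
theorem stmt9_general (φ : ℝ → ℝ)
    (hφmeas : Measurable φ)
    (hφ0 : ∀ t : ℝ, 0 ≤ t → 0 ≤ φ t)
    (α₀ : ℝ) (hα₀ : 0 < α₀)
    (hroot : (∫ t in Ioi (0:ℝ), Real.exp (-(α₀ * t)) * φ t) = 1)
    (η : ℕ → ℝ) (hη : Tendsto η atTop (𝓝 0)) :
    Tendsto (fun t : ℝ =>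
        Real.exp (-(α₀ * t)) *
          ∑' n : ℕ, η n * ∫ s in (0:ℝ)..t, convPow φ n (t - s) * Real.exp (α₀ * s / 2))
      atTop (𝓝 0) := by
  set g := fun x => Real.exp (-(α₀ * x)) * φ x
  have hg0 : ∀ x, 0 ≤ x → 0 ≤ g x := fun x hx => mul_nonneg (Real.exp_pos _).le (hφ0 x hx)
  have hψ := measurable_positiveDensity (g := g) (by fun_prop)
  have hmass : ∫⁻ x, positiveDensity g x = 1 := by
    rw [positiveDensity, lintegral_indicator measurableSet_Ioi,
      ← ofReal_integral_eq_lintegral_ofReal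
      (Integrable.of_integral_ne_zero (hroot ▸ one_ne_zero))
      ((ae_restrict_iff' measurableSet_Ioi).2 (ae_of_all _ fun x hx => hg0 x (le_of_lt hx))),
      hroot, ENNReal.ofReal_one]
  obtain ⟨M, hM, hbound⟩ := exists_tsum_setLIntegral_Iic_lconvPow_mul_exp_le hψ
    positiveDensity_eq_zero_of_nonpos hmass (half_pos hα₀)
  refine (tendsto_tsum_mul_toReal hη hM hbound fun n => tendsto_setLIntegral_Iic_mul_exp_atTop
    (measurable_lconvPow hψ n) (by simp [lintegral_lconvPow hψ, hmass]) (half_pos hα₀)).congr' ?_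
  filter_upwards [eventually_ge_atTop 0] with t ht
  rw [← tsum_mul_left]
  refine tsum_congr fun n => ?_
  rw [mul_left_comm, exp_neg_mul_intervalIntegral_convPow,
    intervalIntegral_convPow_mul_exp_eq (by fun_prop) hg0 (by simp [hmass]) _ n ht]

/-- **supercritical case, weighted sums.** In the supercritical setting, with
`α₀ > 0` the unique root of `∫₀^∞ e^{-α₀ t} φ t dt = 1`, if `(η_n)_{n≥1}` is a real sequence
tending to `0`, then `e^{-α₀ t} ∑_{n≥1} η_n ∫₀ᵗ φ^{⋆n}(t-s) e^{α₀ s/2} ds → 0` as `t → ∞`.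
(Here `η (n : ℕ)` stands for `η_{n+1}` and `convPow φ n` for `φ^{⋆(n+1)}`.) -/
theorem stmt9 (φ : ℝ → ℝ)
    (hφmeas : Measurable φ)
    (hφ0 : ∀ t : ℝ, 0 ≤ t → 0 ≤ φ t)
    (hΛ : 1 < ∫⁻ s in Ioi (0:ℝ), ENNReal.ofReal (φ s))
    (hφvar : ∃ C : ℝ, 0 < C ∧ ∃ p : ℝ, 0 < p ∧
      ∀ t : ℝ, 0 ≤ t → eVariationOn φ (Icc 0 t) ≤ ENNReal.ofReal (C * (1 + t) ^ p))
    (α₀ : ℝ) (hα₀ : 0 < α₀)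
    (hroot : (∫ t in Ioi (0:ℝ), Real.exp (-(α₀ * t)) * φ t) = 1)
    (η : ℕ → ℝ) (hη : Tendsto η atTop (𝓝 0)) :
    Tendsto (fun t : ℝ =>
        Real.exp (-(α₀ * t)) *
          ∑' n : ℕ, η n * ∫ s in (0:ℝ)..t, convPow φ n (t - s) * Real.exp (α₀ * s / 2))
      atTop (𝓝 0) :=
  stmt9_general φ hφmeas hφ0 α₀ hα₀ hroot η hη
end

section
/- Assume φ:[0,∞)→[0,∞) is measurable with Λ = ∫₀^∞ φ(s) ds ∈ (1,∞], φ has locally finite variation and its total variation on [0,t] is at most C(1+t)^p for some constants C,p>0 and all t≥0; set Γ(t)=∑_{n≥1} φ^{⋆n}(t) (which is locally bounded). Then for any pair of measurable locally bounded functions u,h:(0,∞)→ℝ satisfying u_t = h_t + ∫₀ᵗ φ(t−s) u_s ds for all t>0, one has u_t = h_t + ∫₀ᵗ Γ(t−s) h_s ds for all t>0. -/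
/-!
Iterating `u = h + φ ⋆ u` gives `u = h + ∑_{n<N} φ^{⋆(n+1)} ⋆ h + φ^{⋆(N+1)} ⋆ u`; the step
from `N` to `N + 1` is associativity of the convolution on the half line, i.e. Fubini on the
triangle `0 < r ≤ s ≤ t`. Bounded variation makes `φ` bounded on `[0, t]`, by `M` say, and then
`|φ^{⋆(n+1)}| ≤ M^(n+1) t^n / n!` there. Hence the remainder tends to `0`, and the series `Γ` may
be integrated term by term (dominated convergence).
-/

open MeasureTheory Set Filter Topology intervalIntegral

theorem BoundedVariationOn.abs_le_abs_add {α : Type*} [LinearOrder α] {f : α → ℝ} {s : Set α}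
    (hf : BoundedVariationOn f s) {x y : α} (hx : x ∈ s) (hy : y ∈ s) :
    |f y| ≤ |f x| + (eVariationOn f s).toReal := by
  have := hf.dist_le hy hx
  rw [Real.dist_eq] at this
  linarith [abs_sub_abs_le_abs_sub (f y) (f x)]

noncomputable def causalConv (f g : ℝ → ℝ) (t : ℝ) : ℝ :=
  ∫ s in (0:ℝ)..t, f (t - s) * g s

theorem causalConv_comm (f g : ℝ → ℝ) : causalConv f g = causalConv g f := by
  funext t
  have := integral_comp_sub_left (fun s => g (t - s) * f s) (a := 0) (b := t) t
  simp only [sub_sub_cancel, sub_self, sub_zero] at this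
  rw [causalConv, causalConv, ← this]
  exact integral_congr fun s _ => mul_comm _ _

theorem convPow_succ (φ : ℝ → ℝ) (n : ℕ) :
    convPow φ (n + 1) = causalConv φ (convPow φ n) :=
  funext fun _ => integral_congr fun _ _ => mul_comm _ _

theorem Measurable.intervalIntegral_zero_prod {F : ℝ × ℝ → ℝ} (hF : Measurable F) :
    Measurable fun t => ∫ s in (0:ℝ)..t, F (t, s) := by
  have hsection : ∀ {S : Set (ℝ × ℝ)}, MeasurableSet S →
      Measurable fun t => ∫ s, S.indicator F (t, s) := fun hS =>
    (hF.indicator hS).stronglyMeasurable.integral_prod_right'.measurable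
  have hpos : MeasurableSet {p : ℝ × ℝ | p.2 ∈ Ioc 0 p.1} :=
    (measurableSet_lt measurable_const measurable_snd).inter
      (measurableSet_le measurable_snd measurable_fst)
  have hneg : MeasurableSet {p : ℝ × ℝ | p.2 ∈ Ioc p.1 0} :=
    (measurableSet_lt measurable_fst measurable_snd).inter
      (measurableSet_le measurable_snd measurable_const)
  convert (hsection hpos).sub (hsection hneg) using 2 with t
  rw [intervalIntegral, ← MeasureTheory.integral_indicator measurableSet_Ioc,
    ← MeasureTheory.integral_indicator measurableSet_Ioc]
  rfl

theorem Measurable.causalConv {f g : ℝ → ℝ} (hf : Measurable f) (hg : Measurable g) :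
    Measurable (causalConv f g) :=
  ((hf.comp (measurable_fst.sub measurable_snd)).mul
    (hg.comp measurable_snd)).intervalIntegral_zero_prod

theorem measurable_convPow {φ : ℝ → ℝ} (hφ : Measurable φ) (n : ℕ) : Measurable (convPow φ n) := by
  induction n with
  | zero => exact hφ
  | succ n ih => rw [convPow_succ]; exact hφ.causalConv ih

theorem integral_Ioc_integral_Ioc_swap {K : ℝ → ℝ → ℝ} {a t C : ℝ}
    (hK : Measurable (Function.uncurry K)) (hKC : ∀ s r, a < r → r ≤ s → s ≤ t → |K s r| ≤ C) :
    ∫ s in Ioc a t, ∫ r in Ioc a s, K s r = ∫ r in Ioc a t, ∫ s in Ioc r t, K s r := by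
  set Δ : Set (ℝ × ℝ) := {p | a < p.2 ∧ p.2 ≤ p.1}
  have hΔ : MeasurableSet Δ :=
    (measurableSet_lt measurable_const measurable_snd).inter
      (measurableSet_le measurable_snd measurable_fst)
  have hint : Integrable (Δ.indicator (Function.uncurry K))
      ((volume.restrict (Ioc a t)).prod (volume.restrict (Ioc a t))) := by
    refine Integrable.mono' (integrable_const |C|) (hK.indicator hΔ).aestronglyMeasurable ?_
    rw [Measure.prod_restrict]
    filter_upwards [ae_restrict_mem (measurableSet_Ioc.prod measurableSet_Ioc)] with p hp
    by_cases hpΔ : p ∈ Δ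
    · rw [indicator_of_mem hpΔ, Real.norm_eq_abs]
      exact (hKC p.1 p.2 hpΔ.1 hpΔ.2 hp.1.2).trans (le_abs_self C)
    · simp [indicator_of_notMem hpΔ]
  have hrow : ∀ s ∈ Ioc a t,
      ∫ r in Ioc a t, Δ.indicator (Function.uncurry K) (s, r) = ∫ r in Ioc a s, K s r := by
    intro s hs
    change ∫ r in Ioc a t, (Ioc a s).indicator (K s) r = _
    rw [setIntegral_indicator measurableSet_Ioc, inter_eq_right.2 (Ioc_subset_Ioc_right hs.2)]
  have hcol : ∀ r ∈ Ioc a t,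
      ∫ s in Ioc a t, Δ.indicator (Function.uncurry K) (s, r) = ∫ s in Ioc r t, K s r := by
    intro r hr
    have hslice : ∀ s, Δ.indicator (Function.uncurry K) (s, r) = (Ici r).indicator (K · r) s := by
      intro s
      by_cases hrs : r ≤ s
      · rw [indicator_of_mem (show (s, r) ∈ Δ from ⟨hr.1, hrs⟩), indicator_of_mem (mem_Ici.2 hrs)]
        rfl
      · rw [indicator_of_notMem (fun h => hrs h.2),
          indicator_of_notMem (notMem_Ici.2 (not_le.1 hrs))]
    have hIcc : Ioc a t ∩ Ici r = Icc r t := by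
      ext s
      simp only [mem_inter_iff, mem_Ioc, mem_Ici, mem_Icc]
      exact ⟨fun h => ⟨h.2, h.1.2⟩, fun h => ⟨⟨hr.1.trans_le h.1, h.2⟩, h.1⟩⟩
    simp_rw [hslice]
    rw [setIntegral_indicator measurableSet_Ici, hIcc, integral_Icc_eq_integral_Ioc]
  calc ∫ s in Ioc a t, ∫ r in Ioc a s, K s r
      = ∫ s in Ioc a t, ∫ r in Ioc a t, Δ.indicator (Function.uncurry K) (s, r) :=
        (setIntegral_congr_fun measurableSet_Ioc hrow).symm
    _ = ∫ r in Ioc a t, ∫ s in Ioc a t, Δ.indicator (Function.uncurry K) (s, r) :=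
        integral_integral_swap hint
    _ = ∫ r in Ioc a t, ∫ s in Ioc r t, K s r := setIntegral_congr_fun measurableSet_Ioc hcol

theorem integral_Ioc_mul_sub_eq_causalConv (f g : ℝ → ℝ) {r t : ℝ} (hrt : r ≤ t) :
    ∫ s in Ioc r t, f (t - s) * g (s - r) = causalConv f g (t - r) := by
  have := integral_comp_sub_right (fun x => f (t - r - x) * g x) (a := r) (b := t) r
  simp only [sub_sub_sub_cancel_right, sub_self] at this
  rw [← integral_of_le hrt, this, causalConv]

theorem abs_convPow_le {φ : ℝ → ℝ} {T M : ℝ} (hM : 0 ≤ M) (hφ : ∀ s ∈ Icc 0 T, |φ s| ≤ M)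
    (n : ℕ) {t : ℝ} (ht : t ∈ Icc 0 T) : |convPow φ n t| ≤ M ^ (n + 1) * t ^ n / n.factorial := by
  induction n generalizing t with
  | zero => simpa [convPow] using hφ t ht
  | succ n ih =>
    have hbound : ∀ s ∈ uIoc 0 t,
        ‖convPow φ n s * φ (t - s)‖ ≤ M ^ (n + 2) / n.factorial * s ^ n := by
      intro s hs
      rw [uIoc_of_le ht.1] at hs
      have hs' : s ∈ Icc 0 T := ⟨hs.1.le, hs.2.trans ht.2⟩
      have hs0 := hs'.1
      rw [Real.norm_eq_abs, abs_mul]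
      calc |convPow φ n s| * |φ (t - s)| ≤ M ^ (n + 1) * s ^ n / n.factorial * M := by
            refine mul_le_mul (ih hs') (hφ _ ⟨?_, ?_⟩) (abs_nonneg _) (by positivity) <;>
              linarith [hs.1, hs.2, ht.2]
        _ = M ^ (n + 2) / n.factorial * s ^ n := by ring
    calc |convPow φ (n + 1) t|
        ≤ |∫ s in (0:ℝ)..t, M ^ (n + 2) / n.factorial * s ^ n| :=
          norm_integral_le_abs_of_norm_le ((ae_restrict_mem measurableSet_uIoc).mono hbound)
            ((continuous_const.mul (continuous_pow n)).intervalIntegrable 0 t)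
      _ = M ^ (n + 2) * t ^ (n + 1) / (n + 1).factorial := by
          have ht0 := ht.1
          rw [intervalIntegral.integral_const_mul, integral_pow, zero_pow n.succ_ne_zero, sub_zero,
            abs_of_nonneg (by positivity), Nat.factorial_succ]
          push_cast
          field_simp

theorem exists_summable_bound_convPow {φ : ℝ → ℝ} {t M : ℝ} (ht : 0 ≤ t)
    (hφ : ∀ s ∈ Icc 0 t, |φ s| ≤ M) :
    ∃ D : ℕ → ℝ, Summable D ∧ ∀ n, ∀ s ∈ Icc 0 t, |convPow φ n s| ≤ D n := by
  have hM : 0 ≤ M := (abs_nonneg _).trans (hφ 0 (left_mem_Icc.2 ht))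
  refine ⟨fun n => M ^ (n + 1) * t ^ n / n.factorial, ?_, fun n s hs =>
    (abs_convPow_le hM hφ n hs).trans (by beta_reduce; gcongr; exacts [hs.1, hs.2])⟩
  refine ((Real.summable_pow_div_factorial (M * t)).mul_left M).congr fun n => ?_
  rw [mul_pow, pow_succ]
  ring

section BoundedKernels

variable {f g w : ℝ → ℝ} {t A B C : ℝ}

theorem abs_causalConv_integrand_le (hfA : ∀ s ∈ Icc 0 t, |f s| ≤ A)
    (hwC : ∀ s ∈ Ioc 0 t, |w s| ≤ C) {s : ℝ} (hs : s ∈ Ioc 0 t) : |f (t - s) * w s| ≤ A * C := by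
  have hfs := hfA (t - s) ⟨by linarith [hs.2], by linarith [hs.1]⟩
  rw [abs_mul]
  exact mul_le_mul hfs (hwC s hs) (abs_nonneg _) ((abs_nonneg _).trans hfs)

theorem intervalIntegrable_causalConv_integrand (hf : Measurable f) (hw : Measurable w)
    (ht : 0 ≤ t) (hfA : ∀ s ∈ Icc 0 t, |f s| ≤ A) (hwC : ∀ s ∈ Ioc 0 t, |w s| ≤ C) :
    IntervalIntegrable (fun s => f (t - s) * w s) volume 0 t := by
  rw [intervalIntegrable_iff_integrableOn_Ioc_of_le ht]
  refine Measure.integrableOn_of_bounded (M := A * C) measure_Ioc_lt_top.ne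
    ((hf.comp (measurable_const.sub measurable_id)).mul hw).aestronglyMeasurable ?_
  filter_upwards [ae_restrict_mem measurableSet_Ioc] with s hs
  exact abs_causalConv_integrand_le hfA hwC hs

theorem abs_causalConv_le (ht : 0 ≤ t) (hfA : ∀ s ∈ Icc 0 t, |f s| ≤ A)
    (hwC : ∀ s ∈ Ioc 0 t, |w s| ≤ C) : |causalConv f w t| ≤ A * C * t := by
  have := norm_integral_le_of_norm_le_const (a := 0) (b := t) (f := fun s => f (t - s) * w s)
    fun s hs => abs_causalConv_integrand_le hfA hwC (uIoc_of_le ht ▸ hs)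
  rwa [sub_zero, abs_of_nonneg ht] at this

theorem causalConv_causalConv (hf : Measurable f) (hg : Measurable g) (hw : Measurable w)
    (hfA : ∀ s ∈ Icc 0 t, |f s| ≤ A)
    (hgB : ∀ s ∈ Icc 0 t, |g s| ≤ B) (hwC : ∀ s ∈ Ioc 0 t, |w s| ≤ C) (ht : 0 ≤ t) :
    causalConv f (causalConv g w) t = causalConv (causalConv f g) w t := by
  have hmeas : Measurable (Function.uncurry fun s r => f (t - s) * g (s - r) * w r) :=
    ((hf.comp (measurable_const.sub measurable_fst)).mul
      (hg.comp (measurable_fst.sub measurable_snd))).mul (hw.comp measurable_snd)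
  have hbound : ∀ s r, 0 < r → r ≤ s → s ≤ t → |f (t - s) * g (s - r) * w r| ≤ A * B * C := by
    intro s r hr hrs hst
    have hfs := hfA (t - s) ⟨by linarith, by linarith⟩
    have hgs := hgB (s - r) ⟨by linarith, by linarith⟩
    rw [abs_mul, abs_mul]
    refine mul_le_mul (mul_le_mul hfs hgs (abs_nonneg _) ((abs_nonneg _).trans hfs))
      (hwC r ⟨hr, by linarith⟩) (abs_nonneg _) ?_
    exact mul_nonneg ((abs_nonneg _).trans hfs) ((abs_nonneg _).trans hgs)
  calc causalConv f (causalConv g w) t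
      = ∫ s in Ioc 0 t, ∫ r in Ioc 0 s, f (t - s) * g (s - r) * w r := by
        rw [causalConv, integral_of_le ht]
        refine setIntegral_congr_fun measurableSet_Ioc fun s hs => ?_
        simp only [causalConv, integral_of_le hs.1.le, ← MeasureTheory.integral_const_mul,
          mul_assoc]
    _ = ∫ r in Ioc 0 t, ∫ s in Ioc r t, f (t - s) * g (s - r) * w r :=
        integral_Ioc_integral_Ioc_swap hmeas hbound
    _ = causalConv (causalConv f g) w t := by
        rw [causalConv, integral_of_le ht]
        refine setIntegral_congr_fun measurableSet_Ioc fun r hr => ?_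
        simp only [MeasureTheory.integral_mul_const, integral_Ioc_mul_sub_eq_causalConv f g hr.2]

end BoundedKernels

theorem hasSum_causalConv {k : ℕ → ℝ → ℝ} {w : ℝ → ℝ} {D : ℕ → ℝ} {t C : ℝ} (ht : 0 ≤ t)
    (hk : ∀ n, Measurable (k n)) (hw : Measurable w) (hkD : ∀ n, ∀ s ∈ Icc 0 t, |k n s| ≤ D n)
    (hD : Summable D) (hwC : ∀ s ∈ Ioc 0 t, |w s| ≤ C) :
    HasSum (fun n => causalConv (k n) w t) (causalConv (fun τ => ∑' n, k n τ) w t) := by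
  have hmem : ∀ s ∈ uIoc 0 t, t - s ∈ Icc 0 t := fun s hs => by
    rw [uIoc_of_le ht] at hs
    exact ⟨by linarith [hs.2], by linarith [hs.1]⟩
  exact hasSum_integral_of_dominated_convergence (fun n _ => D n * C)
    (fun n => (((hk n).comp (measurable_const.sub measurable_id)).mul hw).aestronglyMeasurable)
    (fun n => .of_forall fun s hs => abs_causalConv_integrand_le (hkD n) hwC (uIoc_of_le ht ▸ hs))
    (.of_forall fun _ _ => hD.mul_right C) intervalIntegrable_const
    (.of_forall fun s hs =>
      (hD.of_norm_bounded fun n => hkD n _ (hmem s hs)).hasSum.mul_right (w s))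

theorem eq_add_sum_causalConv_convPow {φ u h : ℝ → ℝ} {t Cu Ch : ℝ} {D : ℕ → ℝ} (ht : 0 < t)
    (hφ : Measurable φ) (hu : Measurable u) (hh : Measurable h)
    (hD : ∀ n, ∀ s ∈ Icc 0 t, |convPow φ n s| ≤ D n)
    (huC : ∀ s ∈ Ioc 0 t, |u s| ≤ Cu) (hhC : ∀ s ∈ Ioc 0 t, |h s| ≤ Ch)
    (heq : ∀ s ∈ Ioc 0 t, u s = h s + causalConv φ u s) (N : ℕ) :
    u t = h t + ∑ n ∈ Finset.range N, causalConv (convPow φ n) h t +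
      causalConv (convPow φ N) u t := by
  induction N with
  | zero => simpa [convPow] using heq t ⟨ht, le_rfl⟩
  | succ N ih =>
    have hk := measurable_convPow hφ N
    have hsub : causalConv (convPow φ N) u t - causalConv (convPow φ N) h t =
        causalConv (convPow φ N) (causalConv φ u) t := by
      rw [causalConv, causalConv, causalConv,
        ← integral_sub (intervalIntegrable_causalConv_integrand hk hu ht.le (hD N) huC)
          (intervalIntegrable_causalConv_integrand hk hh ht.le (hD N) hhC)]
      refine integral_congr_ae (.of_forall fun s hs => ?_)
      rw [uIoc_of_le ht.le] at hs
      rw [heq s hs]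
      ring
    have hassoc : causalConv (convPow φ N) (causalConv φ u) t =
        causalConv (convPow φ (N + 1)) u t := by
      rw [causalConv_causalConv hk hφ hu (hD N) (hD 0) huC ht.le, causalConv_comm _ φ, convPow_succ]
    rw [Finset.sum_range_succ]
    linarith

theorem stmt10_general (φ : ℝ → ℝ)
    (hφmeas : Measurable φ)
    (hφvar : ∃ C : ℝ, 0 < C ∧ ∃ p : ℝ, 0 < p ∧
      ∀ t : ℝ, 0 ≤ t → eVariationOn φ (Icc 0 t) ≤ ENNReal.ofReal (C * (1 + t) ^ p))
    (u h : ℝ → ℝ)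
    (humeas : Measurable u) (hhmeas : Measurable h)
    (hulb : ∀ T : ℝ, 0 ≤ T → ∃ M : ℝ, ∀ t ∈ Ioc (0:ℝ) T, |u t| ≤ M)
    (hhlb : ∀ T : ℝ, 0 ≤ T → ∃ M : ℝ, ∀ t ∈ Ioc (0:ℝ) T, |h t| ≤ M)
    (heq : ∀ t : ℝ, 0 < t → u t = h t + ∫ s in (0:ℝ)..t, φ (t - s) * u s) :
    ∀ t : ℝ, 0 < t → u t = h t + ∫ s in (0:ℝ)..t, (∑' n, convPow φ n (t - s)) * h s := by
  intro t ht
  obtain ⟨C, -, p, -, hvar⟩ := hφvar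
  have hφbv : BoundedVariationOn φ (Icc 0 t) :=
    ne_top_of_le_ne_top ENNReal.ofReal_ne_top (hvar t ht.le)
  obtain ⟨D, hDsum, hD⟩ := exists_summable_bound_convPow ht.le fun s hs =>
    hφbv.abs_le_abs_add (left_mem_Icc.2 ht.le) hs
  obtain ⟨Cu, huC⟩ := hulb t ht.le
  obtain ⟨Ch, hhC⟩ := hhlb t ht.le
  have hpartial := eq_add_sum_causalConv_convPow ht hφmeas humeas hhmeas hD huC hhC
    (fun s hs => heq s hs.1)
  have hrem : Tendsto (fun N => causalConv (convPow φ N) u t) atTop (𝓝 0) := by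
    refine squeeze_zero_norm (fun N => abs_causalConv_le ht.le (hD N) huC) ?_
    simpa using (hDsum.tendsto_atTop_zero.mul_const Cu).mul_const t
  have hlim : Tendsto (fun N => ∑ n ∈ Finset.range N, causalConv (convPow φ n) h t) atTop
      (𝓝 (u t - h t)) := by
    have hsums : ∀ N, ∑ n ∈ Finset.range N, causalConv (convPow φ n) h t =
        u t - h t - causalConv (convPow φ N) u t := fun N => by linarith [hpartial N]
    simpa [hsums] using (tendsto_const_nhds (x := u t - h t)).sub hrem
  have hsum := hasSum_causalConv ht.le (measurable_convPow hφmeas) hhmeas hD hDsum hhC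
  change u t = h t + causalConv (fun τ => ∑' n, convPow φ n τ) h t
  rw [tendsto_nhds_unique hsum.tendsto_sum_nat hlim]
  ring

/-- **renewal identity.** In the supercritical setting, with
`Γ t = ∑_{n≥1} φ^{⋆n}(t)` (which is locally bounded), any pair of measurable locally bounded
functions `u, h : (0,∞) → ℝ` with `u t = h t + ∫₀ᵗ φ(t-s) u s ds` for all `t > 0` satisfies
`u t = h t + ∫₀ᵗ Γ(t-s) h s ds` for all `t > 0`. -/
theorem stmt10 (φ : ℝ → ℝ)
    (hφmeas : Measurable φ)
    (hφ0 : ∀ t : ℝ, 0 ≤ t → 0 ≤ φ t)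
    (hΛ : 1 < ∫⁻ s in Ioi (0:ℝ), ENNReal.ofReal (φ s))
    (hφvar : ∃ C : ℝ, 0 < C ∧ ∃ p : ℝ, 0 < p ∧
      ∀ t : ℝ, 0 ≤ t → eVariationOn φ (Icc 0 t) ≤ ENNReal.ofReal (C * (1 + t) ^ p))
    (u h : ℝ → ℝ)
    (humeas : Measurable u) (hhmeas : Measurable h)
    (hulb : ∀ T : ℝ, 0 ≤ T → ∃ M : ℝ, ∀ t ∈ Ioc (0:ℝ) T, |u t| ≤ M)
    (hhlb : ∀ T : ℝ, 0 ≤ T → ∃ M : ℝ, ∀ t ∈ Ioc (0:ℝ) T, |h t| ≤ M)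
    (heq : ∀ t : ℝ, 0 < t → u t = h t + ∫ s in (0:ℝ)..t, φ (t - s) * u s) :
    ∀ t : ℝ, 0 < t → u t = h t + ∫ s in (0:ℝ)..t, (∑' n, convPow φ n (t - s)) * h s :=
  stmt10_general φ hφmeas hφvar u h humeas hhmeas hulb hhlb heq
end

section
/- Let d≥1 and equip ℤ^d with the sup norm |i| = max_{1≤k≤d} |i_k|. Let a:ℕ→[0,∞) be nonincreasing with ∑_{i∈ℤ^d} a(|i|) < ∞. Then there exist a nonincreasing function b:ℕ→[0,∞) with a(k) ≤ b(k) for all k∈ℕ, ∑_{i∈ℤ^d} b(|i|) < ∞, and a constant C>0 such that for every j∈ℤ^d, ∑_{i∈ℤ^d} b(|i|) a(|i−j|) ≤ C b(|j|). -/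
/-!
Take `b n = ∑ₖ θ^k a ⌊n / 2^k⌋` with `θ = 2^{-(d+1)}`. Then `a ≤ b`, `b` is nonincreasing, and
`b n = a n + θ b ⌊n/2⌋`, so halving the argument costs at most a factor `θ⁻¹`. Rounding every
coordinate toward zero after dividing by `2^k` is a `(2^{k+1})^d`-to-one map of `ℤ^d` with
`|⌊i/2^k⌋| = ⌊|i|/2^k⌋`, whence `∑ᵢ b |i| ≤ ∑ₖ θ^k 2^{(k+1)d} ∑ᵢ a |i| = ∑ₖ 2^{d-k} ∑ᵢ a |i|`.
Finally `|i| + |i - j| ≥ |j|`, so one of `|i|`, `|i - j|` is at least `⌊|j|/2⌋` and the matching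
factor of `b |i| · a |i - j|` is at most `θ⁻¹ b |j|`; summing gives the constant
`θ⁻¹ (∑ a + ∑ b)`.
-/

open Set Filter Topology

/-- Lattice points of `ℤ^d`. -/
abbrev Zd (d : ℕ) := Fin d → ℤ

/-- Sup norm on `ℤ^d`: `|i| = max_k |i_k|` (as a natural number). -/
def supNorm (d : ℕ) (i : Zd d) : ℕ := Finset.univ.sup fun k => (i k).natAbs

open Function

theorem summable_comp_and_tsum_comp_le {α β γ : Type*} [Fintype γ] {f : β → ℝ}
    (hf0 : ∀ y, 0 ≤ f y) (hf : Summable f) {q : α → β} (r : α → γ)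
    (hqr : Injective fun x => (q x, r x)) :
    Summable (f ∘ q) ∧ ∑' x, f (q x) ≤ Fintype.card γ * ∑' y, f y := by
  have hF : Summable fun p : β × γ => f p.1 := by
    simpa using hf.mul_of_nonneg (Summable.of_finite (f := fun _ : γ => (1 : ℝ)))
      hf0 (fun _ => zero_le_one)
  refine ⟨hF.comp_injective hqr, ?_⟩
  calc ∑' x, f (q x) ≤ ∑' p : β × γ, f p.1 :=
        (hF.comp_injective hqr).tsum_le_tsum_of_inj _ hqr (fun p _ => hf0 p.1) (fun _ => le_rfl) hF
    _ = ∑' y, Fintype.card γ * f y := by simp [hF.tsum_prod, tsum_fintype]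
    _ = Fintype.card γ * ∑' y, f y := tsum_mul_left

theorem supNorm_tdiv (d m : ℕ) (i : Zd d) :
    supNorm d (fun l => (i l).tdiv m) = supNorm d i / m := by
  have hmono : Monotone (· / m) := fun _ _ h => Nat.div_le_div_right h
  simp only [supNorm, Int.natAbs_tdiv, Int.natAbs_natCast]
  exact
    (Finset.apply_sup_eq_sup_comp (s := Finset.univ) (fun n => n / m) (fun _ _ => hmono.map_max)
      (Nat.zero_div m)).symm

theorem supNorm_le_add_supNorm_sub (d : ℕ) (i j : Zd d) :
    supNorm d j ≤ supNorm d i + supNorm d (i - j) := by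
  refine Finset.sup_le fun l _ => ?_
  calc (j l).natAbs ≤ (i l).natAbs + (i l - j l).natAbs := by omega
    _ ≤ supNorm d i + supNorm d (i - j) :=
        add_le_add (Finset.le_sup (f := fun l => (i l).natAbs) (Finset.mem_univ l))
          (Finset.le_sup (f := fun l => ((i - j) l).natAbs) (Finset.mem_univ l))

theorem summable_and_tsum_supNorm_div_le {d m : ℕ} (hm : 0 < m) {A : ℕ → ℝ} (hA0 : ∀ n, 0 ≤ A n)
    (hA : Summable fun i : Zd d => A (supNorm d i)) :
    (Summable fun i : Zd d => A (supNorm d i / m)) ∧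
      ∑' i : Zd d, A (supNorm d i / m) ≤ (2 * m) ^ d * ∑' i : Zd d, A (supNorm d i) := by
  have hm' : (0 : ℤ) < m := by exact_mod_cast hm
  let r : Zd d → Fin d → Finset.Ioo (-(m : ℤ)) m := fun i l =>
    ⟨(i l).tmod m, Finset.mem_Ioo.2 ⟨Int.lt_tmod_of_pos _ hm', Int.tmod_lt_of_pos _ hm'⟩⟩
  have hinj : Injective fun i : Zd d => ((fun l => (i l).tdiv m : Zd d), r i) := by
    intro i i' h
    simp only [Prod.mk.injEq, funext_iff, r, Subtype.mk.injEq] at h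
    funext l
    rw [← Int.mul_tdiv_add_tmod (i l) m, ← Int.mul_tdiv_add_tmod (i' l) m, h.1 l, h.2 l]
  have hcard : (Fintype.card (Fin d → Finset.Ioo (-(m : ℤ)) m) : ℝ) ≤ (2 * m) ^ d := by
    rw [Fintype.card_fun, Fintype.card_coe, Int.card_Ioo, Fintype.card_fin]
    have h : ((m : ℤ) - -m - 1).toNat ≤ 2 * m := by omega
    exact_mod_cast pow_le_pow_left₀ (Nat.zero_le _) h d
  obtain ⟨hsum, hle⟩ := summable_comp_and_tsum_comp_le (fun i => hA0 _) hA r hinj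
  simp only [Function.comp_def, supNorm_tdiv] at hsum hle
  exact ⟨hsum, hle.trans (by gcongr; exact tsum_nonneg fun i => hA0 _)⟩

noncomputable def dyadicMajorant (θ : ℝ) (a : ℕ → ℝ) (n : ℕ) : ℝ :=
  ∑' k : ℕ, θ ^ k * a (n / 2 ^ k)

section DyadicMajorant

variable {θ : ℝ} {a : ℕ → ℝ}

theorem summable_dyadicMajorant_terms (hθ0 : 0 ≤ θ) (hθ1 : θ < 1) (ha0 : ∀ n, 0 ≤ a n)
    (ha : Antitone a) (n : ℕ) : Summable fun k : ℕ => θ ^ k * a (n / 2 ^ k) :=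
  ((summable_geometric_of_lt_one hθ0 hθ1).mul_right (a 0)).of_nonneg_of_le
    (fun k => mul_nonneg (pow_nonneg hθ0 k) (ha0 _))
    (fun k => mul_le_mul_of_nonneg_left (ha (Nat.zero_le _)) (pow_nonneg hθ0 k))

theorem dyadicMajorant_eq_add (hθ0 : 0 ≤ θ) (hθ1 : θ < 1) (ha0 : ∀ n, 0 ≤ a n)
    (ha : Antitone a) (n : ℕ) :
    dyadicMajorant θ a n = a n + θ * dyadicMajorant θ a (n / 2) := by
  rw [dyadicMajorant, (summable_dyadicMajorant_terms hθ0 hθ1 ha0 ha n).tsum_eq_zero_add,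
    dyadicMajorant, ← tsum_mul_left]
  simp only [pow_zero, Nat.div_one, one_mul, pow_succ', Nat.div_div_eq_div_mul, mul_assoc]

theorem dyadicMajorant_nonneg (hθ0 : 0 ≤ θ) (ha0 : ∀ n, 0 ≤ a n) (n : ℕ) :
    0 ≤ dyadicMajorant θ a n :=
  tsum_nonneg fun k => mul_nonneg (pow_nonneg hθ0 k) (ha0 _)

theorem le_dyadicMajorant (hθ0 : 0 ≤ θ) (hθ1 : θ < 1) (ha0 : ∀ n, 0 ≤ a n)
    (ha : Antitone a) (n : ℕ) : a n ≤ dyadicMajorant θ a n := by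
  rw [dyadicMajorant_eq_add hθ0 hθ1 ha0 ha]
  exact le_add_of_nonneg_right (mul_nonneg hθ0 (dyadicMajorant_nonneg hθ0 ha0 _))

theorem dyadicMajorant_antitone (hθ0 : 0 ≤ θ) (hθ1 : θ < 1) (ha0 : ∀ n, 0 ≤ a n)
    (ha : Antitone a) : Antitone (dyadicMajorant θ a) := fun n m hnm =>
  (summable_dyadicMajorant_terms hθ0 hθ1 ha0 ha m).tsum_le_tsum
    (fun k => mul_le_mul_of_nonneg_left (ha (Nat.div_le_div_right hnm)) (pow_nonneg hθ0 k))
    (summable_dyadicMajorant_terms hθ0 hθ1 ha0 ha n)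

theorem dyadicMajorant_half_le (hθ0 : 0 < θ) (hθ1 : θ < 1) (ha0 : ∀ n, 0 ≤ a n)
    (ha : Antitone a) (n : ℕ) :
    dyadicMajorant θ a (n / 2) ≤ θ⁻¹ * dyadicMajorant θ a n := by
  rw [le_inv_mul_iff₀ hθ0, dyadicMajorant_eq_add hθ0.le hθ1 ha0 ha n]
  exact le_add_of_nonneg_left (ha0 n)

theorem summable_dyadicMajorant_supNorm {d : ℕ} (hθ0 : 0 ≤ θ) (hθd : θ * 2 ^ d < 1)
    (ha0 : ∀ n, 0 ≤ a n) (hasum : Summable fun i : Zd d => a (supNorm d i)) :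
    Summable fun i : Zd d => dyadicMajorant θ a (supNorm d i) := by
  let G : ℕ × Zd d → ℝ := fun p => θ ^ p.1 * a (supNorm d p.2 / 2 ^ p.1)
  have hG0 : 0 ≤ G := fun p => mul_nonneg (pow_nonneg hθ0 _) (ha0 _)
  have hrow (k : ℕ) := summable_and_tsum_supNorm_div_le (d := d) (Nat.two_pow_pos k) ha0 hasum
  have hcol (k : ℕ) :
      ∑' i, G (k, i) ≤ 2 ^ d * (∑' i : Zd d, a (supNorm d i)) * (θ * 2 ^ d) ^ k :=
    calc ∑' i, G (k, i) = θ ^ k * ∑' i : Zd d, a (supNorm d i / 2 ^ k) :=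
          (hrow k).1.tsum_mul_left (θ ^ k)
      _ ≤ θ ^ k * ((2 * 2 ^ k) ^ d * ∑' i : Zd d, a (supNorm d i)) := by
          gcongr
          exact_mod_cast (hrow k).2
      _ = 2 ^ d * (∑' i : Zd d, a (supNorm d i)) * (θ * 2 ^ d) ^ k := by ring
  have hG : Summable G :=
    (summable_prod_of_nonneg hG0).2 ⟨fun k => (hrow k).1.mul_left (θ ^ k),
      ((summable_geometric_of_lt_one (by positivity) hθd).mul_left _).of_nonneg_of_le
        (fun k => tsum_nonneg fun i => hG0 _) hcol⟩
  exact hG.prod_symm.prod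

end DyadicMajorant

section Convolution

variable {a b : ℕ → ℝ} {K : ℝ}

theorem mul_le_mul_add_of_le_add (ha0 : ∀ n, 0 ≤ a n) (ha : Antitone a) (hb0 : ∀ n, 0 ≤ b n)
    (hb : Antitone b) (hab : ∀ n, a n ≤ b n) (hK : ∀ n, b (n / 2) ≤ K * b n) {x y n : ℕ}
    (hn : n ≤ x + y) : b x * a y ≤ K * b n * (a y + b x) := by
  rcases le_or_gt (n / 2) x with hx | hx
  · have hbx : b x ≤ K * b n := (hb hx).trans (hK n)
    calc b x * a y ≤ K * b n * a y := mul_le_mul_of_nonneg_right hbx (ha0 y)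
      _ ≤ K * b n * (a y + b x) :=
          mul_le_mul_of_nonneg_left (le_add_of_nonneg_right (hb0 x)) ((hb0 x).trans hbx)
  · have hay : a y ≤ K * b n := ((ha (by omega : n / 2 ≤ y)).trans (hab _)).trans (hK n)
    calc b x * a y ≤ K * b n * b x := by
          rw [mul_comm]; exact mul_le_mul_of_nonneg_right hay (hb0 x)
      _ ≤ K * b n * (a y + b x) :=
          mul_le_mul_of_nonneg_left (le_add_of_nonneg_left (ha0 y)) ((ha0 y).trans hay)

theorem summable_and_tsum_mul_supNorm_sub_le {d : ℕ} (ha0 : ∀ n, 0 ≤ a n) (ha : Antitone a)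
    (hb0 : ∀ n, 0 ≤ b n) (hb : Antitone b) (hab : ∀ n, a n ≤ b n)
    (hK : ∀ n, b (n / 2) ≤ K * b n) (hasum : Summable fun i : Zd d => a (supNorm d i))
    (hbsum : Summable fun i : Zd d => b (supNorm d i)) (j : Zd d) :
    (Summable fun i : Zd d => b (supNorm d i) * a (supNorm d (i - j))) ∧
      ∑' i : Zd d, b (supNorm d i) * a (supNorm d (i - j)) ≤
        K * (∑' i : Zd d, a (supNorm d i) + ∑' i : Zd d, b (supNorm d i)) * b (supNorm d j) := by
  have htrans : HasSum (fun i : Zd d => a (supNorm d (i - j))) (∑' i : Zd d, a (supNorm d i)) :=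
    (Equiv.subRight j).hasSum_iff (f := fun i : Zd d => a (supNorm d i)) |>.2 hasum.hasSum
  have hmaj := (htrans.add hbsum.hasSum).mul_left (K * b (supNorm d j))
  have hle (i : Zd d) := mul_le_mul_add_of_le_add ha0 ha hb0 hb hab hK
    (supNorm_le_add_supNorm_sub d i j)
  have hsum := Summable.of_nonneg_of_le (fun i => mul_nonneg (hb0 _) (ha0 _)) hle hmaj.summable
  refine ⟨hsum, (hsum.tsum_le_tsum hle hmaj.summable).trans_eq ?_⟩
  rw [hmaj.tsum_eq]
  ring

end Convolution

theorem stmt18_general (d : ℕ) (a : ℕ → ℝ)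
    (ha0 : ∀ k, 0 ≤ a k) (hamono : Antitone a)
    (hasum : Summable fun i : Zd d => a (supNorm d i)) :
    ∃ b : ℕ → ℝ, Antitone b ∧ (∀ k, 0 ≤ b k) ∧ (∀ k, a k ≤ b k) ∧
      (Summable fun i : Zd d => b (supNorm d i)) ∧
      ∃ C : ℝ, 0 < C ∧ ∀ j : Zd d,
        (Summable fun i : Zd d => b (supNorm d i) * a (supNorm d (i - j))) ∧
        (∑' i : Zd d, b (supNorm d i) * a (supNorm d (i - j))) ≤ C * b (supNorm d j) := by
  set θ : ℝ := (2 ^ (d + 1))⁻¹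
  have hθ0 : 0 < θ := by positivity
  have hθd : θ * 2 ^ d < 1 := by norm_num [θ, pow_succ]
  have hθ1 : θ < 1 := inv_lt_one_of_one_lt₀ (one_lt_pow₀ one_lt_two d.succ_ne_zero)
  set b := dyadicMajorant θ a
  have hb0 : ∀ n, 0 ≤ b n := dyadicMajorant_nonneg hθ0.le ha0
  have hb : Antitone b := dyadicMajorant_antitone hθ0.le hθ1 ha0 hamono
  have hab : ∀ n, a n ≤ b n := le_dyadicMajorant hθ0.le hθ1 ha0 hamono
  have hbsum := summable_dyadicMajorant_supNorm hθ0.le hθd ha0 hasum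
  set S := ∑' i : Zd d, a (supNorm d i) + ∑' i : Zd d, b (supNorm d i)
  have hS : 0 ≤ S := add_nonneg (tsum_nonneg fun i => ha0 _) (tsum_nonneg fun i => hb0 _)
  refine ⟨b, hb, hb0, hab, hbsum, θ⁻¹ * S + 1, by positivity, fun j => ?_⟩
  obtain ⟨hsum, hle⟩ := summable_and_tsum_mul_supNorm_sub_le ha0 hamono hb0 hb hab
    (dyadicMajorant_half_le hθ0 hθ1 ha0 hamono) hasum hbsum j
  exact ⟨hsum, hle.trans (mul_le_mul_of_nonneg_right (by linarith) (hb0 _))⟩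

/-- Let `d ≥ 1` and let `a : ℕ → [0,∞)` be nonincreasing with
`∑_{i∈ℤ^d} a(|i|) < ∞` (sup norm).  Then there exist a nonincreasing `b : ℕ → [0,∞)` with
`a ≤ b`, `∑_{i∈ℤ^d} b(|i|) < ∞`, and a constant `C > 0` such that for every `j ∈ ℤ^d`,
`∑_{i∈ℤ^d} b(|i|) a(|i-j|) ≤ C b(|j|)`. -/
theorem stmt18 (d : ℕ) (hd : 1 ≤ d) (a : ℕ → ℝ)
    (ha0 : ∀ k, 0 ≤ a k) (hamono : Antitone a)
    (hasum : Summable fun i : Zd d => a (supNorm d i)) :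
    ∃ b : ℕ → ℝ, Antitone b ∧ (∀ k, 0 ≤ b k) ∧ (∀ k, a k ≤ b k) ∧
      (Summable fun i : Zd d => b (supNorm d i)) ∧
      ∃ C : ℝ, 0 < C ∧ ∀ j : Zd d,
        (Summable fun i : Zd d => b (supNorm d i) * a (supNorm d (i - j))) ∧
        (∑' i : Zd d, b (supNorm d i) * a (supNorm d (i - j))) ≤ C * b (supNorm d j) :=
  stmt18_general d a ha0 hamono hasum
end
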